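/- arXiv:1805.05997 — 5 statements merged into one kernel-verified Lean document; each statement's English description precedes it below -/
import Mathlib

section
/- Let h be an orientation-preserving homeomorphism of the unit circle S¹ such that cr(h(a), h(b), h(c), h(d)) = cr(a, b, c, d) for all quadruples a, b, c, d ∈ S¹ in counterclockwise order. Then h is the restriction to S¹ of a disk Möbius transformation: there exist α, β ∈ ℂ with |α|² − |β|² = 1 such that h(z) = (αz + β)/(conj(β)·z + conj(α)) for all z ∈ S¹. -/
open MeasureTheory Filter Topology Set
open scoped ENNReal

noncomputable section

instance : MeasurableSpace Circle := borel Circle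
instance : BorelSpace Circle := ⟨rfl⟩

/-- Four points of the unit circle in (strict) counterclockwise order. -/
def Ccw4 (a b c d : Circle) : Prop :=
  ∃ t₁ t₂ t₃ t₄ : ℝ, t₁ < t₂ ∧ t₂ < t₃ ∧ t₃ < t₄ ∧ t₄ < t₁ + 2 * Real.pi ∧
    a = Circle.exp t₁ ∧ b = Circle.exp t₂ ∧ c = Circle.exp t₃ ∧ d = Circle.exp t₄

/-- Three points of the unit circle in counterclockwise (cyclic) order. -/
def Ccw3 (a b c : Circle) : Prop :=
  ∃ t₁ t₂ t₃ : ℝ, t₁ < t₂ ∧ t₂ < t₃ ∧ t₃ < t₁ + 2 * Real.pi ∧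
    a = Circle.exp t₁ ∧ b = Circle.exp t₂ ∧ c = Circle.exp t₃

/-- The closed counterclockwise arc from `a` to `b` on the circle. -/
def arcCC (a b : Circle) : Set Circle :=
  {z | ∃ t₁ t t₂ : ℝ, t₁ ≤ t ∧ t ≤ t₂ ∧ t₂ < t₁ + 2 * Real.pi ∧
    a = Circle.exp t₁ ∧ z = Circle.exp t ∧ b = Circle.exp t₂}

/-- The box of geodesics `[a,b] × [c,d]`. -/
def boxSet (a b c d : Circle) : Set (Circle × Circle) := arcCC a b ×ˢ arcCC c d

/-- The space `G` of geodesics of the unit disk: pairs of distinct boundary points. -/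
def geodSet : Set (Circle × Circle) := {p | p.1 ≠ p.2}

/-- The cross-ratio of four points of `ℂ`. -/
def cr (a b c d : ℂ) : ℂ := ((a - c) * (b - d)) / ((a - d) * (b - c))

/-- The Liouville measure on the space of geodesics: the pushforward under
`(s,u) ↦ (exp (i s), exp (i u))` of the measure `ds du / |exp(is) - exp(iu)|²`
on a fundamental domain for the periodicity. -/
def liouville : Measure (Circle × Circle) :=
  Measure.map (fun p : ℝ × ℝ => (Circle.exp p.1, Circle.exp p.2))
    (((volume : Measure (ℝ × ℝ)).restrict
        (Set.Ico 0 (2 * Real.pi) ×ˢ Set.Ico 0 (2 * Real.pi))).withDensity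
      fun p : ℝ × ℝ =>
        ENNReal.ofReal
          (1 / ‖Complex.exp ((p.1 : ℂ) * Complex.I) -
            Complex.exp ((p.2 : ℂ) * Complex.I)‖ ^ 2))

/-- `φ : Circle → Circle` is the boundary restriction of a disk Möbius transformation. -/
def IsMobius (φ : Circle → Circle) : Prop :=
  ∃ α β : ℂ, ‖α‖ ^ 2 - ‖β‖ ^ 2 = 1 ∧
    ∀ z : Circle, (φ z : ℂ) = (α * z + β) / ((starRingEnd ℂ) β * z + (starRingEnd ℂ) α)

/-- A homeomorphism of the circle is orientation-preserving if it preserves the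
counterclockwise cyclic order of triples of points. -/
def OrientationPreserving (h : Circle ≃ₜ Circle) : Prop :=
  ∀ a b c : Circle, Ccw3 a b c → Ccw3 (h a) (h b) (h c)

/-- The pullback Liouville current `L_h`, with `L_h (A) = L ((h × h) (A))`. -/
def pullbackCurrent (h : Circle ≃ₜ Circle) : Measure (Circle × Circle) :=
  Measure.map (⇑(h.prodCongr h).symm) liouville

/-- The quasisymmetric constant `M(h)`: the supremum over symmetric boxes `Q`
(those with `L(Q) = log 2`) of `L((h×h)(Q)) / log 2`. -/
def qsConst (h : Circle ≃ₜ Circle) : ℝ≥0∞ :=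
  ⨆ (a : Circle) (b : Circle) (c : Circle) (d : Circle) (_ : Ccw4 a b c d)
    (_ : liouville (boxSet a b c d) = ENNReal.ofReal (Real.log 2)),
    liouville ((fun p : Circle × Circle => (h p.1, h p.2)) '' boxSet a b c d) /
      ENNReal.ofReal (Real.log 2)

/-- `h` is quasisymmetric if its quasisymmetric constant is finite. -/
def Quasisymmetric (h : Circle ≃ₜ Circle) : Prop := qsConst h < ⊤

/-- A geodesic current: a Radon measure on the space of geodesics, encoded as a Borel
measure on `Circle × Circle` which vanishes on the diagonal and is finite on compact
subsets of the off-diagonal. -/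
def IsGeodesicCurrent (μ : Measure (Circle × Circle)) : Prop :=
  μ {p : Circle × Circle | p.1 = p.2} = 0 ∧
    ∀ K : Set (Circle × Circle), IsCompact K → K ⊆ geodSet → μ K < ⊤

/-- A bounded geodesic current. -/
def BoundedCurrent (μ : Measure (Circle × Circle)) : Prop :=
  IsGeodesicCurrent μ ∧
    ∀ ξ : Circle × Circle → ℝ, Continuous ξ → tsupport ξ ⊆ geodSet →
      ∃ C : ℝ, ∀ φ : Circle → Circle, IsMobius φ → |∫ p, ξ (φ p.1, φ p.2) ∂μ| ≤ C

/-- Uniform weak-star convergence of measures on the space of geodesics. -/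
def UnifWeakStarTendsto (μs : ℕ → Measure (Circle × Circle))
    (μ : Measure (Circle × Circle)) : Prop :=
  ∀ ξ : Circle × Circle → ℝ, Continuous ξ → tsupport ξ ⊆ geodSet →
    ∀ ε : ℝ, 0 < ε → ∃ N : ℕ, ∀ n ≥ N, ∀ φ : Circle → Circle, IsMobius φ →
      |∫ p, ξ (φ p.1, φ p.2) ∂(μs n) - ∫ p, ξ (φ p.1, φ p.2) ∂μ| ≤ ε

/-- A point lies in the (topological) support of a measure. -/
def MemSupport (μ : Measure (Circle × Circle)) (p : Circle × Circle) : Prop :=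
  ∀ U : Set (Circle × Circle), IsOpen U → p ∈ U → 0 < μ U

/-- The hyperbolic translation of length `s` along the geodesic from `p` to `q`. -/
def hypTranslate (s : ℝ) (p q w : ℂ) : ℂ :=
  ((Real.exp s : ℂ) * q * (w - p) - p * (w - q)) /
    ((Real.exp s : ℂ) * (w - p) - (w - q))

/-- `e` is the elementary earthquake of amplitude `s` along the geodesic `(x, y)`
applied to `h`: it agrees with `h` on the closed counterclockwise arc from `x` to `y`,
and with `T_s ∘ h` on the complementary open arc. -/
def IsElemEarthquake (x y : Circle) (s : ℝ) (h e : Circle ≃ₜ Circle) : Prop :=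
  (∀ z ∈ arcCC x y, e z = h z) ∧
    ∀ z : Circle, z ∉ arcCC x y → (e z : ℂ) = hypTranslate s (h x) (h y) (h z)

/-- The disk Möbius transformation with parameters `g = (α, β)`. -/
def mobiusFun (g : ℂ × ℂ) : ℂ → ℂ := fun z =>
  (g.1 * z + g.2) / ((starRingEnd ℂ) g.2 * z + (starRingEnd ℂ) g.1)

/-- Product of Möbius parameters, corresponding to composition of the transformations. -/
def mobiusComp (g₁ g₂ : ℂ × ℂ) : ℂ × ℂ :=
  (g₁.1 * g₂.1 + g₁.2 * (starRingEnd ℂ) g₂.2, g₁.1 * g₂.2 + g₁.2 * (starRingEnd ℂ) g₂.1)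

/-- The point `exp (i t)` of the unit circle, as a complex number. -/
def cirexp (t : ℝ) : ℂ := Complex.exp ((t : ℂ) * Complex.I)

/-- The chord length `|exp (i s) - exp (i u)|`. -/
def chord (s u : ℝ) : ℝ := ‖cirexp s - cirexp u‖


open Complex

lemma exp_pi_div_two_mul_I' : Complex.exp ((Real.pi/2 : ℝ) * I) = I := by
  rw [Complex.exp_mul_I, ← Complex.ofReal_cos, ← Complex.ofReal_sin,
    Real.cos_pi_div_two, Real.sin_pi_div_two]; simp

lemma cr_swap_last' (a b c d : ℂ) : cr a b d c = (cr a b c d)⁻¹ := by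
  unfold cr; rw [inv_div]

lemma cr_swap_mid' (a b c d : ℂ) (had : a ≠ d) (hbc : b ≠ c) :
    cr a c b d = 1 - cr a b c d := by
  unfold cr
  have h1 : a - d ≠ 0 := sub_ne_zero.mpr had
  have h2 : b - c ≠ 0 := sub_ne_zero.mpr hbc
  have h3 : c - b ≠ 0 := sub_ne_zero.mpr hbc.symm
  field_simp
  ring

lemma exp_half_sq' (a : ℝ) : Complex.exp ((a:ℂ)*I) = Complex.exp ((a/2:ℝ)*I)^2 := by
  rw [← Complex.exp_nat_mul]; congr 1; push_cast; ring

lemma conj_exp_mul_I' (a : ℝ) :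
    (starRingEnd ℂ) (Complex.exp ((a:ℂ)*I)) = (Complex.exp ((a:ℂ)*I))⁻¹ := by
  rw [← Complex.exp_conj, ← Complex.exp_neg]; congr 1; simp

lemma sin_as_exp' (x y : ℝ) :
    ((Real.sin ((x-y)/2) : ℝ) : ℂ) =
      (Complex.exp ((y/2:ℝ)*I) * (Complex.exp ((x/2:ℝ)*I))⁻¹ -
       (Complex.exp ((y/2:ℝ)*I))⁻¹ * Complex.exp ((x/2:ℝ)*I)) * I / 2 := by
  rw [Complex.ofReal_sin]
  have h2s := Complex.two_sin (((x-y)/2 : ℝ) : ℂ)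
  have e1 : Complex.exp (-(((x-y)/2 : ℝ):ℂ) * I) =
      Complex.exp ((y/2:ℝ)*I) * (Complex.exp ((x/2:ℝ)*I))⁻¹ := by
    rw [← Complex.exp_neg, ← Complex.exp_add]; congr 1; push_cast; ring
  have e2 : Complex.exp ((((x-y)/2 : ℝ):ℂ) * I) =
      (Complex.exp ((y/2:ℝ)*I))⁻¹ * Complex.exp ((x/2:ℝ)*I) := by
    rw [← Complex.exp_neg, ← Complex.exp_add]; congr 1; push_cast; ring
  rw [e1, e2] at h2s
  linear_combination h2s / 2

lemma alg_uvw' (u v w : ℂ) (hu : u ≠ 0) (hv : v ≠ 0) (hw : w ≠ 0) :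
    (32:ℂ)*((u*v⁻¹ - u⁻¹*v)*I/2 * ((v*w⁻¹ - v⁻¹*w)*I/2 * ((u*w⁻¹ - u⁻¹*w)*I/2))) =
      4*I*(v^2 - u^2)*(v^2 - w^2)*(u^2 - w^2)*(u^2)⁻¹*(v^2)⁻¹*(w^2)⁻¹ := by
  trans (4*((u*v⁻¹ - u⁻¹*v)*(v*w⁻¹ - v⁻¹*w)*(u*w⁻¹ - u⁻¹*w))*(I*I)*I)
  · ring
  · rw [Complex.I_mul_I]; field_simp; ring

lemma key_pos' {a b c : ℝ} (hab : a < b) (hbc : b < c) (hca : c < a + 2*Real.pi) :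
    ∃ dd : ℝ, 0 < dd ∧ (dd : ℂ) =
      4*I*(Complex.exp ((b:ℂ)*I) - Complex.exp ((a:ℂ)*I)) *
        (Complex.exp ((b:ℂ)*I) - Complex.exp ((c:ℂ)*I)) *
        (Complex.exp ((a:ℂ)*I) - Complex.exp ((c:ℂ)*I)) *
        (starRingEnd ℂ) (Complex.exp ((a:ℂ)*I)) * (starRingEnd ℂ) (Complex.exp ((b:ℂ)*I)) *
        (starRingEnd ℂ) (Complex.exp ((c:ℂ)*I)) := by
  have hpi := Real.pi_pos
  refine ⟨32*(Real.sin ((b-a)/2) * (Real.sin ((c-b)/2) * Real.sin ((c-a)/2))), ?_, ?_⟩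
  · have s1 : 0 < Real.sin ((b-a)/2) := Real.sin_pos_of_pos_of_lt_pi (by linarith) (by linarith)
    have s2 : 0 < Real.sin ((c-b)/2) := Real.sin_pos_of_pos_of_lt_pi (by linarith) (by linarith)
    have s3 : 0 < Real.sin ((c-a)/2) := Real.sin_pos_of_pos_of_lt_pi (by linarith) (by linarith)
    positivity
  · simp only [Complex.ofReal_mul, Complex.ofReal_ofNat]
    rw [conj_exp_mul_I', conj_exp_mul_I', conj_exp_mul_I',
      exp_half_sq' a, exp_half_sq' b, exp_half_sq' c,
      sin_as_exp' b a, sin_as_exp' c b, sin_as_exp' c a]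
    exact alg_uvw' _ _ _ (Complex.exp_ne_zero _) (Complex.exp_ne_zero _) (Complex.exp_ne_zero _)

set_option maxHeartbeats 2000000 in
/-- an orientation-preserving homeomorphism of the circle preserving the
cross-ratio of every counterclockwise quadruple is the restriction of a disk Möbius
transformation. -/
theorem stmt0 (h : Circle ≃ₜ Circle) (hop : OrientationPreserving h)
    (hcr : ∀ a b c d : Circle, Ccw4 a b c d →
      cr (h a : ℂ) (h b : ℂ) (h c : ℂ) (h d : ℂ) = cr (a : ℂ) (b : ℂ) (c : ℂ) (d : ℂ)) :
    ∃ α β : ℂ, ‖α‖ ^ 2 - ‖β‖ ^ 2 = 1 ∧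
      ∀ z : Circle, (h z : ℂ) =
        (α * z + β) / ((starRingEnd ℂ) β * z + (starRingEnd ℂ) α) := by
  classical
  have hpi := Real.pi_pos
  set e0 : Circle := Circle.exp 0 with he0d
  set e1 : Circle := Circle.exp (Real.pi/2) with he1d
  set e2 : Circle := Circle.exp Real.pi with he2d
  have hco0 : (e0 : ℂ) = 1 := by rw [he0d, Circle.coe_exp]; simp
  have hco1 : (e1 : ℂ) = I := by
    rw [he1d, Circle.coe_exp]; exact_mod_cast exp_pi_div_two_mul_I'
  have hco2 : (e2 : ℂ) = -1 := by
    rw [he2d, Circle.coe_exp]; exact_mod_cast Complex.exp_pi_mul_I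
  -- distinctness of base points
  have hne01 : e0 ≠ e1 := by
    intro hh
    have := congrArg (fun x : Circle => (x:ℂ)) hh
    simp only [hco0, hco1] at this
    simp [Complex.ext_iff] at this
  have hne02 : e0 ≠ e2 := by
    intro hh
    have := congrArg (fun x : Circle => (x:ℂ)) hh
    simp only [hco0, hco2] at this
    norm_num at this
  have hne12 : e1 ≠ e2 := by
    intro hh
    have := congrArg (fun x : Circle => (x:ℂ)) hh
    simp only [hco1, hco2] at this
    simp [Complex.ext_iff] at this
  set A : ℂ := ((h e0 : Circle) : ℂ) with hAd
  set B : ℂ := ((h e1 : Circle) : ℂ) with hBd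
  set C : ℂ := ((h e2 : Circle) : ℂ) with hCd
  have hA0 : A ≠ 0 := Circle.coe_ne_zero _
  have hB0 : B ≠ 0 := Circle.coe_ne_zero _
  have hC0 : C ≠ 0 := Circle.coe_ne_zero _
  have hcne : ∀ x y : Circle, x ≠ y → ((h x : Circle) : ℂ) ≠ ((h y : Circle) : ℂ) := by
    intro x y hxy hh
    exact hxy (h.injective (Circle.coe_injective hh))
  have hAB : A ≠ B := hcne _ _ hne01
  have hAC : A ≠ C := hcne _ _ hne02
  have hBC : B ≠ C := hcne _ _ hne12
  have hconjA : (starRingEnd ℂ) A = A⁻¹ := by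
    rw [hAd, ← Circle.coe_inv_eq_conj, Circle.coe_inv]
  have hconjB : (starRingEnd ℂ) B = B⁻¹ := by
    rw [hBd, ← Circle.coe_inv_eq_conj, Circle.coe_inv]
  have hconjC : (starRingEnd ℂ) C = C⁻¹ := by
    rw [hCd, ← Circle.coe_inv_eq_conj, Circle.coe_inv]
  -- the ccw order of A B C and the positive quantity dd
  obtain ⟨a, b, c, hab, hbc, hca, hha, hhb, hhc⟩ :=
    hop e0 e1 e2 ⟨0, Real.pi/2, Real.pi, by linarith, by linarith, by linarith,
      he0d, he1d, he2d⟩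
  have hAe : A = Complex.exp ((a:ℂ)*I) := by rw [hAd, hha, Circle.coe_exp]
  have hBe : B = Complex.exp ((b:ℂ)*I) := by rw [hBd, hhb, Circle.coe_exp]
  have hCe : C = Complex.exp ((c:ℂ)*I) := by rw [hCd, hhc, Circle.coe_exp]
  obtain ⟨dd, hdd0, hddeq⟩ := key_pos' hab hbc (by linarith)
  rw [← hAe, ← hBe, ← hCe] at hddeq
  -- the coefficients
  set p : ℂ := -2*A*(B-C) + (1+I)*B*(A-C) with hpd
  set q : ℂ := 2*I*A*(B-C) - (1+I)*B*(A-C) with hqd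
  set r : ℂ := -2*(B-C) + (1+I)*(A-C) with hrd
  set s : ℂ := 2*I*(B-C) - (1+I)*(A-C) with hsd
  have hconjp : (starRingEnd ℂ) p = -2*A⁻¹*(B⁻¹-C⁻¹) + (1-I)*B⁻¹*(A⁻¹-C⁻¹) := by
    simp only [hpd, map_add, map_sub, map_mul, map_neg, map_one, map_ofNat,
      Complex.conj_I, hconjA, hconjB, hconjC]
    ring
  have hconjq : (starRingEnd ℂ) q = -2*I*A⁻¹*(B⁻¹-C⁻¹) - (1-I)*B⁻¹*(A⁻¹-C⁻¹) := by
    simp only [hqd, map_add, map_sub, map_mul, map_neg, map_one, map_ofNat,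
      Complex.conj_I, hconjA, hconjB, hconjC]
    ring
  have hconjs : (starRingEnd ℂ) s = -2*I*(B⁻¹-C⁻¹) - (1-I)*(A⁻¹-C⁻¹) := by
    simp only [hsd, map_add, map_sub, map_mul, map_neg, map_one, map_ofNat,
      Complex.conj_I, hconjA, hconjB, hconjC]
    ring
  -- identity I1 : p conj p - q conj q = dd
  have hI1 : p * (starRingEnd ℂ) p - q * (starRingEnd ℂ) q = (dd:ℂ) := by
    rw [hconjp, hconjq, hpd, hqd, hddeq, hconjA, hconjB, hconjC]
    field_simp
    ring_nf
    simp only [Complex.I_sq]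
    ring
  -- identity I2 : s conj q = r conj p
  have hI2 : s * (starRingEnd ℂ) q = r * (starRingEnd ℂ) p := by
    rw [hconjp, hconjq, hsd, hrd]
    field_simp
    ring_nf
    simp only [Complex.I_sq]
    ring
  -- identity I3 : p conj p = s conj s
  have hI3 : p * (starRingEnd ℂ) p = s * (starRingEnd ℂ) s := by
    rw [hconjp, hconjs, hpd, hsd]
    field_simp
    ring_nf
    simp only [Complex.I_sq]
    ring
  have hdreal : Complex.normSq p - Complex.normSq q = dd := by
    have := hI1
    rw [Complex.mul_conj, Complex.mul_conj] at this
    exact_mod_cast this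
  have hp0 : p ≠ 0 := by
    intro h0
    rw [h0] at hdreal
    simp only [map_zero, zero_sub] at hdreal
    nlinarith [Complex.normSq_nonneg q]
  have hpsreal : Complex.normSq p = Complex.normSq s := by
    have := hI3
    rw [Complex.mul_conj, Complex.mul_conj] at this
    exact_mod_cast this
  have hs0 : s ≠ 0 := by
    intro h0
    rw [h0] at hpsreal
    simp only [map_zero] at hpsreal
    exact hp0 (Complex.normSq_eq_zero.mp hpsreal)
  -- evaluation identities
  have hE0 : p + q = A*(r+s) := by simp only [hpd, hqd, hrd, hsd]; ring
  have hE1 : p*I + q = B*(r*I+s) := by simp only [hpd, hqd, hrd, hsd]; ring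
  have hE2 : p*(-1) + q = C*(r*(-1)+s) := by simp only [hpd, hqd, hrd, hsd]; ring
  -- the main pointwise equation
  have main : ∀ w z : ℂ, w ≠ A → z ≠ 1 →
      cr A B C w = cr 1 I (-1) z → w*(r*z+s) = p*z+q := by
    intro w z hwA hz1 hcreq
    unfold cr at hcreq
    rw [div_eq_div_iff
        (mul_ne_zero (sub_ne_zero.mpr (fun hh => hwA hh.symm)) (sub_ne_zero.mpr hBC))
        (mul_ne_zero (sub_ne_zero.mpr (fun hh => hz1 hh.symm))
          (by norm_num [Complex.ext_iff]))] at hcreq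
    simp only [hpd, hqd, hrd, hsd]
    linear_combination hcreq
  have key : ∀ z : Circle, ((h z : Circle) : ℂ) * (r*(z:ℂ)+s) = p*(z:ℂ)+q := by
    intro z
    by_cases hz0 : z = e0
    · rw [hz0, hco0, ← hAd]; linear_combination hE0
    by_cases hz1 : z = e1
    · rw [hz1, hco1, ← hBd]; linear_combination hE1
    by_cases hz2 : z = e2
    · rw [hz2, hco2, ← hCd]; linear_combination hE2
    have hz := Circle.exp_arg z
    set t := ((z : ℂ)).arg with htd
    have htmem := Complex.arg_mem_Ioc (z:ℂ)
    have ht0 : t ≠ 0 := by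
      intro hh; exact hz0 (by rw [← hz, hh, ← he0d])
    have ht1 : t ≠ Real.pi/2 := by
      intro hh; exact hz1 (by rw [← hz, hh, ← he1d])
    have ht2 : t ≠ Real.pi := by
      intro hh; exact hz2 (by rw [← hz, hh, ← he2d])
    have hzc0 : (z:ℂ) ≠ 1 := by
      rw [← hco0]; exact fun hh => hz0 (Circle.coe_injective hh)
    have hzc1 : (z:ℂ) ≠ I := by
      rw [← hco1]; exact fun hh => hz1 (Circle.coe_injective hh)
    have hwA : ((h z : Circle) : ℂ) ≠ A := by rw [hAd]; exact hcne z e0 hz0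
    have hwB : ((h z : Circle) : ℂ) ≠ B := by rw [hBd]; exact hcne z e1 hz1
    rcases lt_trichotomy t 0 with htneg | hteq | htpos
    · have hccw4 : Ccw4 e0 e1 e2 z :=
        ⟨0, Real.pi/2, Real.pi, t + 2*Real.pi, by linarith, by linarith,
          by linarith [htmem.1], by linarith, he0d, he1d, he2d,
          by rw [Circle.periodic_exp]; exact hz.symm⟩
      have h4 := hcr e0 e1 e2 z hccw4
      rw [hco0, hco1, hco2, ← hAd, ← hBd, ← hCd] at h4
      exact main _ _ hwA hzc0 h4
    · exact absurd hteq ht0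
    rcases lt_trichotomy t (Real.pi/2) with htA | htB | htC
    · have hccw4 : Ccw4 e0 z e1 e2 :=
        ⟨0, t, Real.pi/2, Real.pi, htpos, htA, by linarith, by linarith,
          he0d, hz.symm, he1d, he2d⟩
      have h4 := hcr e0 z e1 e2 hccw4
      rw [hco0, hco1, hco2, ← hAd, ← hBd, ← hCd] at h4
      have hkey : cr A B C ((h z : Circle) : ℂ) = cr 1 I (-1) (z:ℂ) := by
        calc cr A B C ((h z : Circle) : ℂ)
            = (cr A B ((h z : Circle) : ℂ) C)⁻¹ := cr_swap_last' A B _ C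
          _ = (1 - cr A ((h z : Circle) : ℂ) B C)⁻¹ := by
              rw [cr_swap_mid' A ((h z : Circle) : ℂ) B C hAC hwB]
          _ = (1 - cr 1 (z:ℂ) I (-1))⁻¹ := by rw [h4]
          _ = (cr 1 I (z:ℂ) (-1))⁻¹ := by
              rw [cr_swap_mid' 1 (z:ℂ) I (-1) (by norm_num) hzc1]
          _ = cr 1 I (-1) (z:ℂ) := (cr_swap_last' 1 I (z:ℂ) (-1)).symm
      exact main _ _ hwA hzc0 hkey
    · exact absurd htB ht1
    · have hccw4 : Ccw4 e0 e1 z e2 :=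
        ⟨0, Real.pi/2, t, Real.pi, by linarith, htC,
          lt_of_le_of_ne htmem.2 ht2, by linarith, he0d, he1d, hz.symm, he2d⟩
      have h4 := hcr e0 e1 z e2 hccw4
      rw [hco0, hco1, hco2, ← hAd, ← hBd, ← hCd] at h4
      have hkey : cr A B C ((h z : Circle) : ℂ) = cr 1 I (-1) (z:ℂ) := by
        calc cr A B C ((h z : Circle) : ℂ)
            = (cr A B ((h z : Circle) : ℂ) C)⁻¹ := cr_swap_last' A B _ C
          _ = (cr 1 I (z:ℂ) (-1))⁻¹ := by rw [h4]
          _ = cr 1 I (-1) (z:ℂ) := (cr_swap_last' 1 I (z:ℂ) (-1)).symm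
      exact main _ _ hwA hzc0 hkey
  -- nonvanishing of the denominator
  have hrs : ∀ z : Circle, r*(z:ℂ)+s ≠ 0 := by
    intro z hzero
    have h0 : p*(z:ℂ)+q = 0 := by rw [← key z, hzero, mul_zero]
    have f1 : (p - A*r)*(1-(z:ℂ)) = 0 := by linear_combination hE0 - h0 + A*hzero
    have f2 : (p - B*r)*(I-(z:ℂ)) = 0 := by linear_combination hE1 - h0 + B*hzero
    have f3 : (p - C*r)*(-1-(z:ℂ)) = 0 := by linear_combination hE2 - h0 + C*hzero
    have getp : ∀ X : ℂ, ∀ u : ℂ, (p - X*r)*u = 0 → u ≠ 0 → p = X*r := by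
      intro X u hXu hu
      rcases mul_eq_zero.mp hXu with hh | hh
      · linear_combination hh
      · exact absurd hh hu
    have hI1 : (I:ℂ) ≠ 1 := by
      intro hh; simpa using congrArg Complex.im hh
    have hIm1 : (I:ℂ) ≠ -1 := by
      intro hh; simpa using congrArg Complex.im hh
    by_cases hzc : (z:ℂ) = 1
    · have e2' : p = B*r := getp B _ f2 (by rw [hzc]; exact sub_ne_zero.mpr hI1)
      have e3' : p = C*r := getp C _ f3 (by rw [hzc]; norm_num)
      have hBCr : (B-C)*r = 0 := by linear_combination e3' - e2'
      rcases mul_eq_zero.mp hBCr with hh | hh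
      · exact hBC (by linear_combination hh)
      · exact hp0 (by rw [e2', hh, mul_zero])
    by_cases hzcI : (z:ℂ) = I
    · have e1' : p = A*r := getp A _ f1 (by
        rw [hzcI]; exact sub_ne_zero.mpr (fun hh => hI1 hh.symm))
      have e3' : p = C*r := getp C _ f3 (by
        rw [hzcI]; exact sub_ne_zero.mpr (fun hh => hIm1 hh.symm))
      have hACr : (A-C)*r = 0 := by linear_combination e3' - e1'
      rcases mul_eq_zero.mp hACr with hh | hh
      · exact hAC (by linear_combination hh)
      · exact hp0 (by rw [e1', hh, mul_zero])
    · have e1' : p = A*r := getp A _ f1 (sub_ne_zero.mpr (fun hh => hzc hh.symm))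
      have e2' : p = B*r := getp B _ f2 (sub_ne_zero.mpr (fun hh => hzcI hh.symm))
      have hABr : (A-B)*r = 0 := by linear_combination e2' - e1'
      rcases mul_eq_zero.mp hABr with hh | hh
      · exact hAB (by linear_combination hh)
      · exact hp0 (by rw [e1', hh, mul_zero])
  -- construction of the normalized coefficients
  have hconjp0 : (starRingEnd ℂ) p ≠ 0 := by
    simpa using hp0
  set l : ℂ := s * ((starRingEnd ℂ) p)⁻¹ with hld
  have hl0 : l ≠ 0 := mul_ne_zero hs0 (inv_ne_zero hconjp0)
  have hlp : l * (starRingEnd ℂ) p = s := by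
    rw [hld]; field_simp
  have hlq : l * (starRingEnd ℂ) q = r := by
    rw [hld]
    field_simp
    linear_combination hI2
  have hnp0 : Complex.normSq p ≠ 0 := by
    simpa [Complex.normSq_eq_zero] using hp0
  have hnl : Complex.normSq l = 1 := by
    rw [hld, map_mul, map_inv₀, Complex.normSq_conj, ← hpsreal]
    exact mul_inv_cancel₀ hnp0
  obtain ⟨cc, hcc⟩ := IsAlgClosed.exists_pow_nat_eq (l * ((dd:ℝ):ℂ)) (n := 2) (by norm_num)
  have hdd0' : ((dd:ℝ):ℂ) ≠ 0 := by exact_mod_cast hdd0.ne'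
  have hc0 : cc ≠ 0 := by
    intro hh
    exact mul_ne_zero hl0 hdd0' (by rw [← hcc, hh]; ring)
  have hnc : Complex.normSq cc = dd := by
    have h1 : (Complex.normSq cc)^2 = dd^2 := by
      have h2 := congrArg Complex.normSq hcc
      rw [map_pow, map_mul, hnl, Complex.normSq_ofReal, one_mul] at h2
      rw [h2]; ring
    have h2 : (Complex.normSq cc - dd)*(Complex.normSq cc + dd) = 0 := by
      linear_combination h1
    rcases mul_eq_zero.mp h2 with hh | hh
    · linarith
    · linarith [Complex.normSq_nonneg cc]
  have hccconj : cc * (starRingEnd ℂ) cc = ((dd:ℝ):ℂ) := by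
    rw [Complex.mul_conj, hnc]
  have hclc : cc = l * (starRingEnd ℂ) cc := by
    apply mul_left_cancel₀ hc0
    linear_combination hcc - l*hccconj
  refine ⟨p/cc, q/cc, ?_, ?_⟩
  · rw [Complex.sq_norm, Complex.sq_norm, Complex.normSq_div, Complex.normSq_div, hnc,
      div_sub_div_same, hdreal, div_self hdd0.ne']
  · intro z
    have k := key z
    have hden := hrs z
    have hconjc0 : (starRingEnd ℂ) cc ≠ 0 := by simpa using hc0
    have hcp' : (starRingEnd ℂ) p = s / l := by
      rw [eq_div_iff hl0]
      linear_combination hlp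
    have hcq' : (starRingEnd ℂ) q = r / l := by
      rw [eq_div_iff hl0]
      linear_combination hlq
    have hcc' : (starRingEnd ℂ) cc = cc / l := by
      rw [eq_div_iff hl0]
      linear_combination -hclc
    rw [map_div₀, map_div₀, hcp', hcq', hcc']
    have hsimp : ((r/l)/(cc/l))*(z:ℂ) + (s/l)/(cc/l) = (r*(z:ℂ)+s)/cc := by
      field_simp
    rw [hsimp]
    have hnum : p/cc*(z:ℂ) + q/cc = (p*(z:ℂ)+q)/cc := by ring
    rw [hnum]
    have hdd : (p*(z:ℂ)+q)/cc / ((r*(z:ℂ)+s)/cc) = (p*(z:ℂ)+q)/(r*(z:ℂ)+s) := by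
      field_simp
    rw [hdd, eq_div_iff hden]
    linear_combination k
end
end

section
/- Let h₁ and h₂ be orientation-preserving homeomorphisms of S¹ and let t > 0 be a real number such that L_{h₂} = t·L_{h₁} as measures on G (equivalently, L_{h₂}(Q) = t·L_{h₁}(Q) for every box Q). Then t = 1, and hence L_{h₁} = L_{h₂}. -/
open MeasureTheory Filter Topology Set
open scoped ENNReal

noncomputable section

namespace Stmt9
local notation "π" => Real.pi

lemma two_pi_pos : (0:ℝ) < 2 * π := by positivity

lemma exp_shift (t : ℝ) (m : ℤ) : Circle.exp (t + m * (2 * π)) = Circle.exp t :=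
  Circle.exp_eq_exp.mpr ⟨m, rfl⟩

/-- every circle point has a representative in any half-open window of length 2π -/
lemma exists_rep (z : Circle) (θ : ℝ) : ∃ t : ℝ, z = Circle.exp t ∧ t ∈ Ico θ (θ + 2 * π) := by
  set a := Complex.arg (z : ℂ) with ha
  refine ⟨a + (⌈(θ - a) / (2 * π)⌉ : ℤ) * (2 * π), ?_, ?_, ?_⟩
  · rw [exp_shift, ha, Circle.exp_arg]
  · have := Int.le_ceil ((θ - a) / (2 * π))
    have h2 := (div_le_iff₀ two_pi_pos).mp this
    linarith
  · have h1 := Int.ceil_lt_add_one ((θ - a) / (2 * π))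
    have h2 : (θ - a) / (2 * π) * (2 * π) = θ - a := by field_simp
    nlinarith [two_pi_pos]

lemma rep_unique {x y : ℝ} (h : Circle.exp x = Circle.exp y) (hcl : |x - y| < 2 * π) : x = y := by
  obtain ⟨m, hm⟩ := Circle.exp_eq_exp.mp h
  have h2 : |(m : ℝ)| * (2 * π) < 1 * (2 * π) := by
    calc |(m : ℝ)| * (2 * π) = |(m:ℝ) * (2 * π)| := by
          rw [abs_mul, abs_of_pos two_pi_pos]
      _ = |x - y| := by rw [hm]; ring_nf
      _ < 1 * (2 * π) := by linarith
  have hm1 : |(m:ℝ)| < 1 := lt_of_mul_lt_mul_right h2 two_pi_pos.le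
  have hm0 : m = 0 := by
    have h3 : -1 < (m:ℝ) ∧ (m:ℝ) < 1 := abs_lt.mp hm1
    have h4 : (-1:ℤ) < m := by exact_mod_cast h3.1
    have h5 : m < 1 := by exact_mod_cast h3.2
    omega
  rw [hm0] at hm; push_cast at hm; linarith

/-- exp is injective on half-open windows of length 2π -/
lemma rep_unique' {θ x y : ℝ} (hx : x ∈ Ico θ (θ + 2 * π)) (hy : y ∈ Ico θ (θ + 2 * π))
    (h : Circle.exp x = Circle.exp y) : x = y := by
  refine rep_unique h (abs_sub_lt_iff.mpr ⟨by linarith [hx.1, hx.2, hy.1, hy.2], by linarith [hx.1, hx.2, hy.1, hy.2]⟩)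

/-- characterization of Ccw3 via representatives in a window based at a rep of `a`. -/
lemma ccw3_iff {a b c : Circle} {α β γ : ℝ} (ha : a = Circle.exp α) (hb : b = Circle.exp β)
    (hc : c = Circle.exp γ) (hβ : β ∈ Ioo α (α + 2 * π)) (hγ : γ ∈ Ioo α (α + 2 * π)) :
    Ccw3 a b c ↔ β < γ := by
  constructor
  · rintro ⟨s₁, s₂, s₃, h12, h23, h31, ha', hb', hc'⟩
    obtain ⟨m, hm⟩ := Circle.exp_eq_exp.mp (ha ▸ ha' : Circle.exp α = Circle.exp s₁).symm
    -- s₁ = α + m * 2π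
    have hb2 : Circle.exp (s₂ - m * (2*π)) = Circle.exp β :=
      (Circle.exp_eq_exp.mpr ⟨-m, by push_cast; ring⟩).trans (hb ▸ hb' : Circle.exp β = Circle.exp s₂).symm
    have hc2 : Circle.exp (s₃ - m * (2*π)) = Circle.exp γ :=
      (Circle.exp_eq_exp.mpr ⟨-m, by push_cast; ring⟩).trans (hc ▸ hc' : Circle.exp γ = Circle.exp s₃).symm
    have hβ2 : s₂ - m * (2*π) = β := by
      apply rep_unique' (θ := α) _ ⟨hβ.1.le, hβ.2⟩ hb2
      constructor <;> [linarith [hm, h12]; linarith [hm, h12, h23, h31]]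
    have hγ2 : s₃ - m * (2*π) = γ := by
      apply rep_unique' (θ := α) _ ⟨hγ.1.le, hγ.2⟩ hc2
      constructor <;> [linarith [hm, h12, h23]; linarith [hm, h31]]
    linarith [hβ2, hγ2, h23]
  · intro hlt
    exact ⟨α, β, γ, hβ.1, hlt, hγ.2, ha, hb, hc⟩

lemma ccw3_ne {a b c : Circle} (h : Ccw3 a b c) : a ≠ b ∧ a ≠ c ∧ b ≠ c := by
  obtain ⟨s₁, s₂, s₃, h12, h23, h31, ha, hb, hc⟩ := h
  have key : ∀ x y : ℝ, x < y → y < x + 2 * π → Circle.exp x ≠ Circle.exp y := by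
    intro x y hxy hxy2 hco
    have := rep_unique hco (abs_sub_lt_iff.mpr ⟨by linarith, by linarith⟩)
    linarith
  exact ⟨ha ▸ hb ▸ key _ _ h12 (by linarith), ha ▸ hc ▸ key _ _ (h12.trans h23) h31,
    hb ▸ hc ▸ key _ _ h23 (by linarith)⟩

lemma ccw3_total {a b c : Circle} (hab : a ≠ b) (hac : a ≠ c) (hbc : b ≠ c) :
    Ccw3 a b c ∨ Ccw3 a c b := by
  obtain ⟨α, hα⟩ := exists_rep a 0
  obtain ⟨β, hβ, hβw⟩ := exists_rep b α
  obtain ⟨γ, hγ, hγw⟩ := exists_rep c α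
  have hβα : β ≠ α := fun h => hab (by rw [hα.1, hβ, h])
  have hγα : γ ≠ α := fun h => hac (by rw [hα.1, hγ, h])
  have hβγ : β ≠ γ := fun h => hbc (by rw [hβ, hγ, h])
  have hβ' : β ∈ Ioo α (α + 2*π) := ⟨lt_of_le_of_ne hβw.1 (Ne.symm hβα), hβw.2⟩
  have hγ' : γ ∈ Ioo α (α + 2*π) := ⟨lt_of_le_of_ne hγw.1 (Ne.symm hγα), hγw.2⟩
  rcases lt_or_gt_of_ne hβγ with h | h
  · exact Or.inl ((ccw3_iff hα.1 hβ hγ hβ' hγ').mpr h)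
  · exact Or.inr ((ccw3_iff hα.1 hγ hβ hγ' hβ').mpr h)

lemma ccw3_asymm {a b c : Circle} (h : Ccw3 a b c) : ¬ Ccw3 a c b := by
  intro h'
  obtain ⟨hab, hac, hbc⟩ := ccw3_ne h
  obtain ⟨α, hα⟩ := exists_rep a 0
  obtain ⟨β, hβ, hβw⟩ := exists_rep b α
  obtain ⟨γ, hγ, hγw⟩ := exists_rep c α
  have hβα : β ≠ α := fun hh => hab (by rw [hα.1, hβ, hh])
  have hγα : γ ≠ α := fun hh => hac (by rw [hα.1, hγ, hh])
  have hβ' : β ∈ Ioo α (α + 2*π) := ⟨lt_of_le_of_ne hβw.1 (Ne.symm hβα), hβw.2⟩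
  have hγ' : γ ∈ Ioo α (α + 2*π) := ⟨lt_of_le_of_ne hγw.1 (Ne.symm hγα), hγw.2⟩
  have h1 := (ccw3_iff hα.1 hβ hγ hβ' hγ').mp h
  have h2 := (ccw3_iff hα.1 hγ hβ hγ' hβ').mp h'
  linarith


lemma ccw4_iff' {a b c d : Circle} : Ccw4 a b c d ↔ Ccw3 a b c ∧ Ccw3 a c d := by
  constructor
  · rintro ⟨t₁, t₂, t₃, t₄, h12, h23, h34, h41, ha, hb, hc, hd⟩
    exact ⟨⟨t₁, t₂, t₃, h12, h23, by linarith, ha, hb, hc⟩,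
      ⟨t₁, t₃, t₄, by linarith, h34, h41, ha, hc, hd⟩⟩
  · rintro ⟨h1, h2⟩
    obtain ⟨α, hα, -⟩ := exists_rep a 0
    obtain ⟨hab, hac, hbc⟩ := ccw3_ne h1
    obtain ⟨-, had, hcd⟩ := ccw3_ne h2
    obtain ⟨β, hβ, hβw⟩ := exists_rep b α
    obtain ⟨γ, hγ, hγw⟩ := exists_rep c α
    obtain ⟨δ, hδ, hδw⟩ := exists_rep d α
    have hβ' : β ∈ Set.Ioo α (α + 2*π) :=
      ⟨lt_of_le_of_ne hβw.1 (fun hh => hab (by rw [hα, hβ, hh]) : α ≠ β), hβw.2⟩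
    have hγ' : γ ∈ Set.Ioo α (α + 2*π) :=
      ⟨lt_of_le_of_ne hγw.1 (fun hh => hac (by rw [hα, hγ, hh]) : α ≠ γ), hγw.2⟩
    have hδ' : δ ∈ Set.Ioo α (α + 2*π) :=
      ⟨lt_of_le_of_ne hδw.1 (fun hh => had (by rw [hα, hδ, hh]) : α ≠ δ), hδw.2⟩
    have hβγ := (ccw3_iff hα hβ hγ hβ' hγ').mp h1
    have hγδ := (ccw3_iff hα hγ hδ hγ' hδ').mp h2
    exact ⟨α, β, γ, δ, hβ'.1, hβγ, hγδ, hδ'.2, hα, hβ, hγ, hδ⟩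

lemma ccw4_map {h : Circle ≃ₜ Circle} (hop : OrientationPreserving h) {a b c d : Circle}
    (hc4 : Ccw4 a b c d) : Ccw4 (h a) (h b) (h c) (h d) := by
  rw [ccw4_iff'] at *
  exact ⟨hop _ _ _ hc4.1, hop _ _ _ hc4.2⟩

lemma ccw4_rotate {a b c d : Circle} (hc4 : Ccw4 a b c d) : Ccw4 b c d a := by
  obtain ⟨t₁, t₂, t₃, t₄, h12, h23, h34, h41, ha, hb, hc, hd⟩ := hc4
  refine ⟨t₂, t₃, t₄, t₁ + 2*π, h23, h34, h41, by linarith, hb, hc, hd, ?_⟩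
  rw [ha, eq_comm]; exact Circle.exp_eq_exp.mpr ⟨1, by push_cast; ring⟩

lemma ccw4_ne {a b c d : Circle} (hc4 : Ccw4 a b c d) :
    a ≠ b ∧ a ≠ c ∧ a ≠ d ∧ b ≠ c ∧ b ≠ d ∧ c ≠ d := by
  have h1 := (ccw4_iff'.mp hc4).1
  have h2 := (ccw4_iff'.mp hc4).2
  have h3 := (ccw4_iff'.mp (ccw4_rotate hc4)).1   -- Ccw3 b c d
  exact ⟨(ccw3_ne h1).1, (ccw3_ne h1).2.1, (ccw3_ne h2).2.1, (ccw3_ne h1).2.2,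
    (ccw3_ne h3).2.1, (ccw3_ne h2).2.2⟩

lemma op_symm {h : Circle ≃ₜ Circle} (hop : OrientationPreserving h) :
    OrientationPreserving h.symm := by
  intro A B C hABC
  obtain ⟨hAB, hAC, hBC⟩ := ccw3_ne hABC
  have hab : h.symm A ≠ h.symm B := fun hh => hAB (by simpa using congrArg h hh)
  have hac : h.symm A ≠ h.symm C := fun hh => hAC (by simpa using congrArg h hh)
  have hbc : h.symm B ≠ h.symm C := fun hh => hBC (by simpa using congrArg h hh)
  rcases ccw3_total hab hac hbc with hgood | hbad
  · exact hgood
  · exfalso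
    have := hop _ _ _ hbad
    simp only [Homeomorph.apply_symm_apply] at this
    exact ccw3_asymm hABC this

/-- the closed ccw arc as an image of an interval -/
lemma arc_eq_image {a b : Circle} {t₁ t₂ : ℝ} (ha : a = Circle.exp t₁) (hb : b = Circle.exp t₂)
    (h12 : t₁ ≤ t₂) (h21 : t₂ < t₁ + 2 * π) :
    arcCC a b = Circle.exp '' Set.Icc t₁ t₂ := by
  ext z
  constructor
  · rintro ⟨s₁, s, s₂, h1s, hs2, h21', ha', hz, hb'⟩
    obtain ⟨m, hm⟩ := Circle.exp_eq_exp.mp (ha ▸ ha' : Circle.exp t₁ = Circle.exp s₁).symm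
    -- s₁ = t₁ + m 2π
    have hs₂ : s₂ = t₂ + m * (2*π) := by
      have he : Circle.exp (s₂ - m*(2*π)) = Circle.exp t₂ :=
        (Circle.exp_eq_exp.mpr ⟨-m, by push_cast; ring⟩).trans (hb ▸ hb' : Circle.exp t₂ = Circle.exp s₂).symm
      have := rep_unique' (θ := t₁) ⟨by linarith, by linarith⟩ ⟨h12, h21⟩ he
      linarith
    exact ⟨s - m*(2*π), ⟨by linarith, by linarith⟩,
      (Circle.exp_eq_exp.mpr ⟨-m, by push_cast; ring⟩).trans hz.symm⟩
  · rintro ⟨s, hs, rfl⟩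
    exact ⟨t₁, s, t₂, hs.1, hs.2, h21, ha, rfl, hb⟩

lemma arc_compact {a b : Circle} (hab : a ≠ b) : IsCompact (arcCC a b) := by
  obtain ⟨t₁, ht₁, -⟩ := exists_rep a 0
  obtain ⟨t₂, ht₂, ht₂w⟩ := exists_rep b t₁
  rw [arc_eq_image ht₁ ht₂ ht₂w.1 ht₂w.2]
  exact (isCompact_Icc).image Circle.exp.continuous

/-- membership characterization of the closed arc, for distinct endpoints -/
lemma arc_mem_iff {a b : Circle} (hab : a ≠ b) (z : Circle) :
    z ∈ arcCC a b ↔ z = a ∨ z = b ∨ Ccw3 a z b := by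
  obtain ⟨t₁, ht₁, -⟩ := exists_rep a 0
  obtain ⟨t₂, ht₂, ht₂w⟩ := exists_rep b t₁
  have h12 : t₁ < t₂ := lt_of_le_of_ne ht₂w.1 (fun hh => hab (by rw [ht₁, ht₂, hh]) : t₁ ≠ t₂)
  rw [arc_eq_image ht₁ ht₂ h12.le ht₂w.2]
  constructor
  · rintro ⟨s, hs, rfl⟩
    rcases eq_or_lt_of_le hs.1 with rfl | h1s
    · exact Or.inl ht₁.symm
    rcases eq_or_lt_of_le hs.2 with rfl | hs2
    · exact Or.inr (Or.inl ht₂.symm)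
    · exact Or.inr (Or.inr ⟨t₁, s, t₂, h1s, hs2, ht₂w.2, ht₁, rfl, ht₂⟩)
  · rintro (rfl | rfl | hz)
    · exact ⟨t₁, ⟨le_refl _, h12.le⟩, ht₁.symm⟩
    · exact ⟨t₂, ⟨h12.le, le_refl _⟩, ht₂.symm⟩
    · obtain ⟨s, hsz, hsw⟩ := exists_rep z t₁
      have hz' : z ≠ a := fun hh => (ccw3_ne hz).1 hh.symm
      have hs' : s ∈ Set.Ioo t₁ (t₁ + 2*π) :=
        ⟨lt_of_le_of_ne hsw.1 (fun hh => hz' (by rw [hsz, ht₁, hh]) : t₁ ≠ s), hsw.2⟩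
      have ht₂' : t₂ ∈ Set.Ioo t₁ (t₁ + 2*π) := ⟨h12, ht₂w.2⟩
      have := (ccw3_iff ht₁ hsz ht₂ hs' ht₂').mp hz
      exact ⟨s, ⟨hs'.1.le, this.le⟩, hsz.symm⟩

/-- an orientation preserving homeomorphism maps closed ccw arcs to closed ccw arcs -/
lemma image_arc {h : Circle ≃ₜ Circle} (hop : OrientationPreserving h) {a b : Circle}
    (hab : a ≠ b) : h '' arcCC a b = arcCC (h a) (h b) := by
  have hab' : h a ≠ h b := fun hh => hab (h.injective hh)
  ext z
  rw [arc_mem_iff hab' z]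
  constructor
  · rintro ⟨w, hw, rfl⟩
    rcases (arc_mem_iff hab w).mp hw with rfl | rfl | hw3
    · exact Or.inl rfl
    · exact Or.inr (Or.inl rfl)
    · exact Or.inr (Or.inr (hop _ _ _ hw3))
  · rintro (rfl | rfl | hz3)
    · exact ⟨a, (arc_mem_iff hab a).mpr (Or.inl rfl), rfl⟩
    · exact ⟨b, (arc_mem_iff hab b).mpr (Or.inr (Or.inl rfl)), rfl⟩
    · refine ⟨h.symm z, (arc_mem_iff hab _).mpr (Or.inr (Or.inr ?_)), h.apply_symm_apply z⟩
      have := op_symm hop _ _ _ hz3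
      simpa using this

def E2 : ℝ × ℝ → Circle × Circle := fun p => (Circle.exp p.1, Circle.exp p.2)

def dens : ℝ × ℝ → ℝ≥0∞ := fun p =>
  ENNReal.ofReal (1 / ‖Complex.exp ((p.1 : ℂ) * Complex.I) -
    Complex.exp ((p.2 : ℂ) * Complex.I)‖ ^ 2)

def Q0 : Set (ℝ × ℝ) := Set.Ico 0 (2*π) ×ˢ Set.Ico 0 (2*π)

def μd : Measure (ℝ × ℝ) := volume.withDensity dens

def vm (m : ℤ × ℤ) : ℝ × ℝ := ((m.1 : ℝ) * (2*π), (m.2 : ℝ) * (2*π))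

lemma liouville_def : liouville = Measure.map E2 ((volume.restrict Q0).withDensity dens) := rfl

lemma contE2 : Continuous E2 :=
  (Circle.exp.continuous.comp continuous_fst).prodMk (Circle.exp.continuous.comp continuous_snd)

lemma dens_meas : Measurable dens := by
  have hc : Continuous fun p : ℝ × ℝ => ‖Complex.exp ((p.1 : ℂ) * Complex.I) -
      Complex.exp ((p.2 : ℂ) * Complex.I)‖ :=
    continuous_norm.comp
      ((Complex.continuous_exp.comp ((Complex.continuous_ofReal.comp continuous_fst).mul
          continuous_const)).sub
        (Complex.continuous_exp.comp ((Complex.continuous_ofReal.comp continuous_snd).mul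
          continuous_const)))
  unfold dens
  simp only [one_div]
  exact ENNReal.measurable_ofReal.comp ((hc.measurable.pow_const 2).inv)

lemma exp_I_periodic (x : ℝ) (k : ℤ) :
    Complex.exp (((x + k * (2*π) : ℝ) : ℂ) * Complex.I) = Complex.exp ((x:ℂ) * Complex.I) := by
  rw [show ((x + k * (2*π) : ℝ) : ℂ) * Complex.I = (x:ℂ) * Complex.I + k * (2 * (π:ℂ) * Complex.I)
    by push_cast; ring, Complex.exp_add, Complex.exp_int_mul_two_pi_mul_I, mul_one]

lemma dens_periodic (p : ℝ × ℝ) (m : ℤ × ℤ) : dens (p + vm m) = dens p := by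
  have h1 : ((p + vm m).1 : ℝ) = p.1 + m.1 * (2*π) := Prod.fst_add ..
  have h2 : ((p + vm m).2 : ℝ) = p.2 + m.2 * (2*π) := Prod.snd_add ..
  simp only [dens, h1, h2, exp_I_periodic]

lemma map_vm (m : ℤ × ℤ) : Measure.map (fun p => p + vm m) μd = μd := by
  have hmp : MeasurePreserving (fun p : ℝ×ℝ => p + vm m) volume volume :=
    measurePreserving_add_right volume (vm m)
  ext S hS
  rw [Measure.map_apply hmp.measurable hS, μd, withDensity_apply _ (hmp.measurable hS),
    withDensity_apply _ hS]
  calc ∫⁻ p in (fun p => p + vm m) ⁻¹' S, dens p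
      = ∫⁻ p in (fun p => p + vm m) ⁻¹' S, dens (p + vm m) := by
        apply setLIntegral_congr_fun (hmp.measurable hS)
        exact fun p _ => (dens_periodic p m).symm
    _ = ∫⁻ p in S, dens p := hmp.setLIntegral_comp_preimage hS dens_meas

/-- representatives in a length-2π window are unique (integer shift version) -/
lemma int_window {k k' : ℤ} {x θ : ℝ} (h : x + k*(2*π) ∈ Set.Ico θ (θ + 2*π))
    (h' : x + k'*(2*π) ∈ Set.Ico θ (θ + 2*π)) : k = k' := by
  obtain ⟨h1, h2⟩ := h; obtain ⟨h3, h4⟩ := h'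
  have hl : ((k - k' : ℤ) : ℝ) * (2*π) < 1 * (2*π) := by push_cast; nlinarith [Real.pi_pos]
  have hr : (-1 : ℝ) * (2*π) < ((k - k' : ℤ) : ℝ) * (2*π) := by push_cast; nlinarith [Real.pi_pos]
  have h5 : ((k - k' : ℤ) : ℝ) < 1 := lt_of_mul_lt_mul_right hl two_pi_pos.le
  have h6 : (-1 : ℝ) < ((k - k' : ℤ) : ℝ) := lt_of_mul_lt_mul_right hr two_pi_pos.le
  have : (k - k' : ℤ) < 1 := by exact_mod_cast h5
  have : (-1 : ℤ) < k - k' := by exact_mod_cast h6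
  omega

lemma exists_wrap (x : ℝ) : ∃ k : ℤ, x - k*(2*π) ∈ Set.Ico 0 (2*π) := by
  refine ⟨⌊x / (2*π)⌋, ?_, ?_⟩
  · have h1 := mul_le_mul_of_nonneg_right (Int.floor_le (x / (2*π))) two_pi_pos.le
    rw [div_mul_cancel₀ x (ne_of_gt two_pi_pos)] at h1
    linarith
  · have h2 := mul_lt_mul_of_pos_right (Int.lt_floor_add_one (x / (2*π))) two_pi_pos
    rw [div_mul_cancel₀ x (ne_of_gt two_pi_pos)] at h2
    push_cast at h2 ⊢
    linarith

/-- The main unwrapping lemma: the Liouville measure of the image of a small rectangle. -/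
lemma liouville_image {t₁ t₂ t₃ t₄ : ℝ} (h12 : t₁ ≤ t₂) (hw1 : t₂ < t₁ + 2*π)
    (h34 : t₃ ≤ t₄) (hw2 : t₄ < t₃ + 2*π) :
    liouville (E2 '' (Set.Icc t₁ t₂ ×ˢ Set.Icc t₃ t₄)) = μd (Set.Icc t₁ t₂ ×ˢ Set.Icc t₃ t₄) := by
  set R : Set (ℝ × ℝ) := Set.Icc t₁ t₂ ×ˢ Set.Icc t₃ t₄ with hR
  have hRm : MeasurableSet R := (measurableSet_Icc.prod measurableSet_Icc)
  have hRc : IsCompact R := isCompact_Icc.prod isCompact_Icc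
  have hImg : MeasurableSet (E2 '' R) := (hRc.image contE2).measurableSet
  have hQ0 : MeasurableSet Q0 := (measurableSet_Ico.prod measurableSet_Ico)
  -- preimage decomposition
  have hW : E2 ⁻¹' (E2 '' R) = ⋃ m : ℤ × ℤ, (fun p => p + vm m) ⁻¹' R := by
    ext p
    simp only [Set.mem_preimage, Set.mem_image, Set.mem_iUnion]
    constructor
    · rintro ⟨q, hq, hEq⟩
      have h1 : Circle.exp q.1 = Circle.exp p.1 := congrArg Prod.fst hEq
      have h2 : Circle.exp q.2 = Circle.exp p.2 := congrArg Prod.snd hEq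
      obtain ⟨k, hk⟩ := Circle.exp_eq_exp.mp h1
      obtain ⟨l, hl⟩ := Circle.exp_eq_exp.mp h2
      refine ⟨(k, l), ?_⟩
      have : p + vm (k, l) = q := by
        apply Prod.ext
        · rw [Prod.fst_add, hk]; rfl
        · rw [Prod.snd_add, hl]; rfl
      rw [this]; exact hq
    · rintro ⟨m, hm⟩
      refine ⟨p + vm m, hm, ?_⟩
      apply Prod.ext
      · show Circle.exp ((p + vm m).1) = Circle.exp p.1
        rw [Prod.fst_add]
        exact exp_shift p.1 m.1
      · show Circle.exp ((p + vm m).2) = Circle.exp p.2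
        rw [Prod.snd_add]
        exact exp_shift p.2 m.2
  have hWm : MeasurableSet (E2 ⁻¹' (E2 '' R)) := contE2.measurable hImg
  -- disjointness of translates of R
  have hdisjR : Pairwise (Function.onFun Disjoint (fun m : ℤ × ℤ => (fun p => p + vm m) ⁻¹' R)) := by
    intro m m' hmm
    rw [Function.onFun]
    rw [Set.disjoint_left]
    intro p hp hp'
    simp only [Set.mem_preimage, hR, Set.mem_prod] at hp hp'
    apply hmm
    have e1 : m.1 = m'.1 := by
      apply int_window (x := p.1) (θ := t₁)
      · exact ⟨hp.1.1, lt_of_le_of_lt hp.1.2 hw1⟩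
      · exact ⟨hp'.1.1, lt_of_le_of_lt hp'.1.2 hw1⟩
    have e2 : m.2 = m'.2 := by
      apply int_window (x := p.2) (θ := t₃)
      · exact ⟨hp.2.1, lt_of_le_of_lt hp.2.2 hw2⟩
      · exact ⟨hp'.2.1, lt_of_le_of_lt hp'.2.2 hw2⟩
    exact Prod.ext e1 e2
  -- the pieces
  set A : ℤ × ℤ → Set (ℝ × ℝ) := fun m => (fun p => p + vm m) ⁻¹' R ∩ Q0 with hA
  set B : ℤ × ℤ → Set (ℝ × ℝ) := fun m => R ∩ (fun p => p - vm m) ⁻¹' Q0 with hB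
  have hAm : ∀ m, MeasurableSet (A m) :=
    fun m => ((measurable_add_const (vm m)) hRm).inter hQ0
  have hBm : ∀ m, MeasurableSet (B m) :=
    fun m => hRm.inter ((measurable_sub_const (vm m)) hQ0)
  have hABeq : ∀ m, μd (A m) = μd (B m) := by
    intro m
    have : B m = (fun p => p + vm (-m)) ⁻¹' (A m) := by
      ext p
      simp only [hA, hB, Set.mem_inter_iff, Set.mem_preimage]
      have e1 : p + vm (-m) + vm m = p := by
        apply Prod.ext <;>
          simp only [Prod.fst_add, Prod.snd_add, vm, Prod.fst_neg, Prod.snd_neg] <;>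
          push_cast <;> ring
      have e2 : p + vm (-m) = p - vm m := by
        apply Prod.ext <;>
          simp only [Prod.fst_add, Prod.snd_add, Prod.fst_sub, Prod.snd_sub, vm,
            Prod.fst_neg, Prod.snd_neg] <;> push_cast <;> ring
      rw [e1, e2]
    rw [this, ← Measure.map_apply (measurable_add_const (vm (-m))) (hAm m), map_vm]
  have hsum1 : μd (E2 ⁻¹' (E2 '' R) ∩ Q0) = ∑' m : ℤ × ℤ, μd (A m) := by
    rw [hW, Set.iUnion_inter]
    apply measure_iUnion
    · intro m m' hmm
      exact Set.disjoint_of_subset Set.inter_subset_left Set.inter_subset_left (hdisjR hmm)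
    · exact hAm
  have hsum2 : ∑' m : ℤ × ℤ, μd (B m) = μd R := by
    rw [← measure_iUnion _ hBm]
    · congr 1
      rw [hB, ← Set.inter_iUnion]
      rw [Set.inter_eq_left]
      intro p _
      obtain ⟨k, hk⟩ := exists_wrap p.1
      obtain ⟨l, hl⟩ := exists_wrap p.2
      simp only [Set.mem_iUnion, Set.mem_preimage]
      exact ⟨(k, l), hk, hl⟩
    · intro m m' hmm
      rw [Function.onFun, Set.disjoint_left]
      intro p hp hp'
      apply hmm
      simp only [hB, Set.mem_inter_iff, Set.mem_preimage, Q0, Set.mem_prod] at hp hp'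
      have e1 : -m.1 = -m'.1 := by
        apply int_window (x := p.1) (θ := 0)
        · push_cast; constructor
          · have := hp.2.1.1; simpa [sub_eq_add_neg, vm] using this
          · have := hp.2.1.2; rw [zero_add]; simpa [sub_eq_add_neg, vm] using this
        · push_cast; constructor
          · have := hp'.2.1.1; simpa [sub_eq_add_neg, vm] using this
          · have := hp'.2.1.2; rw [zero_add]; simpa [sub_eq_add_neg, vm] using this
      have e2 : -m.2 = -m'.2 := by
        apply int_window (x := p.2) (θ := 0)
        · push_cast; constructor
          · have := hp.2.2.1; simpa [sub_eq_add_neg, vm] using this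
          · have := hp.2.2.2; rw [zero_add]; simpa [sub_eq_add_neg, vm] using this
        · push_cast; constructor
          · have := hp'.2.2.1; simpa [sub_eq_add_neg, vm] using this
          · have := hp'.2.2.2; rw [zero_add]; simpa [sub_eq_add_neg, vm] using this
      apply Prod.ext <;> omega
  calc liouville (E2 '' R)
      = ((volume.restrict Q0).withDensity dens) (E2 ⁻¹' (E2 '' R)) := by
        rw [liouville_def, Measure.map_apply contE2.measurable hImg]
    _ = (μd.restrict Q0) (E2 ⁻¹' (E2 '' R)) := by rw [μd, restrict_withDensity hQ0]
    _ = μd (E2 ⁻¹' (E2 '' R) ∩ Q0) := Measure.restrict_apply hWm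
    _ = ∑' m : ℤ × ℤ, μd (A m) := hsum1
    _ = ∑' m : ℤ × ℤ, μd (B m) := tsum_congr hABeq
    _ = μd R := hsum2



lemma chord_sq (s u : ℝ) : ‖Complex.exp ((s:ℂ) * Complex.I) - Complex.exp ((u:ℂ) * Complex.I)‖ ^ 2
    = 4 * Real.sin ((s-u)/2) ^ 2 := by
  set a := Complex.exp ((s:ℂ) * Complex.I / 2) with ha
  set b := Complex.exp ((u:ℂ) * Complex.I / 2) with hb
  have ha0 : a ≠ 0 := Complex.exp_ne_zero _
  have hb0 : b ≠ 0 := Complex.exp_ne_zero _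
  have haa : ‖a‖ = 1 := by
    rw [ha, show (s:ℂ)*Complex.I/2 = ((s/2:ℝ):ℂ)*Complex.I by push_cast; ring,
      Complex.norm_exp_ofReal_mul_I]
  have hbb : ‖b‖ = 1 := by
    rw [hb, show (u:ℂ)*Complex.I/2 = ((u/2:ℝ):ℂ)*Complex.I by push_cast; ring,
      Complex.norm_exp_ofReal_mul_I]
  have key : Complex.exp ((s:ℂ) * Complex.I) - Complex.exp ((u:ℂ) * Complex.I)
      = (a * b) * (2 * Complex.I * Complex.sin ((((s-u)/2 : ℝ):ℂ))) := by
    have e1 : Complex.exp ((s:ℂ) * Complex.I) = a ^ 2 := by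
      rw [ha, ← Complex.exp_nat_mul]; congr 1; push_cast; ring
    have e2 : Complex.exp ((u:ℂ) * Complex.I) = b ^ 2 := by
      rw [hb, ← Complex.exp_nat_mul]; congr 1; push_cast; ring
    have e3 : Complex.exp ((((s-u)/2 : ℝ):ℂ) * Complex.I) = a / b := by
      rw [ha, hb, ← Complex.exp_sub]; congr 1; push_cast; ring
    have e4 : Complex.exp (-(((s-u)/2 : ℝ):ℂ) * Complex.I) = b / a := by
      rw [ha, hb, ← Complex.exp_sub]; congr 1; push_cast; ring
    rw [Complex.sin, e1, e2, e3, e4]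
    field_simp
    linear_combination (a^2 - b^2) * Complex.I_sq
  rw [key, norm_mul, norm_mul, norm_mul, norm_mul, haa, hbb,
    ← Complex.ofReal_sin, Complex.norm_real, Real.norm_eq_abs]
  simp only [Complex.norm_I, Complex.norm_two, one_mul, mul_one]
  rw [mul_pow, sq_abs]; norm_num

/-- the integrand in angle coordinates -/
def gfun : ℝ × ℝ → ℝ := fun p => 1 / (4 * Real.sin ((p.2 - p.1)/2) ^ 2)

lemma dens_eq : dens = fun p => ENNReal.ofReal (gfun p) := by
  funext p
  unfold dens gfun
  rw [chord_sq]
  congr 2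
  rw [show (p.1 - p.2)/2 = -((p.2-p.1)/2) by ring, Real.sin_neg]
  ring

lemma gfun_nonneg (p : ℝ × ℝ) : 0 ≤ gfun p := by
  unfold gfun; positivity

lemma sin_half_pos {x : ℝ} (h0 : 0 < x) (h2 : x < 2*π) : 0 < Real.sin (x/2) :=
  Real.sin_pos_of_pos_of_lt_pi (by linarith) (by linarith)

/-- FTC computation of the rectangle integral -/
lemma mud_rect {t₁ t₂ t₃ t₄ : ℝ} (h12 : t₁ < t₂) (h23 : t₂ < t₃) (h34 : t₃ < t₄)
    (h41 : t₄ < t₁ + 2*π) :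
    μd (Set.Icc t₁ t₂ ×ˢ Set.Icc t₃ t₄) = ENNReal.ofReal
      (Real.log (Real.sin ((t₃-t₁)/2)) + Real.log (Real.sin ((t₄-t₂)/2))
        - Real.log (Real.sin ((t₄-t₁)/2)) - Real.log (Real.sin ((t₃-t₂)/2))) := by
  set R : Set (ℝ × ℝ) := Set.Icc t₁ t₂ ×ˢ Set.Icc t₃ t₄ with hR
  have hRm : MeasurableSet R := measurableSet_Icc.prod measurableSet_Icc
  have hRc : IsCompact R := isCompact_Icc.prod isCompact_Icc
  -- sin ((u-s)/2) is positive for (s,u) ∈ R-ish range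
  have hsinpos : ∀ s u : ℝ, s ∈ Set.Icc t₁ t₂ → u ∈ Set.Icc t₃ t₄ → 0 < Real.sin ((u - s)/2) := by
    intro s u hs hu
    exact sin_half_pos (by linarith [hs.2, hu.1]) (by linarith [hs.1, hu.2])
  have hgcont : ContinuousOn gfun R := by
    apply ContinuousOn.div continuousOn_const
    · apply Continuous.continuousOn; fun_prop
    · rintro ⟨s, u⟩ hp
      have := hsinpos s u hp.1 hp.2
      positivity
  have hgint : IntegrableOn gfun R volume := hgcont.integrableOn_compact hRc
  -- reduce to a Bochner integral
  have step1 : μd R = ENNReal.ofReal (∫ p in R, gfun p) := by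
    rw [μd, dens_eq, withDensity_apply _ hRm,
      ← ofReal_integral_eq_lintegral_ofReal hgint
        (Filter.Eventually.of_forall gfun_nonneg)]
  rw [step1]
  congr 1
  -- iterated integral
  have step2 : ∫ p in R, gfun p = ∫ s in Set.Icc t₁ t₂, ∫ u in Set.Icc t₃ t₄, gfun (s, u) := by
    rw [MeasureTheory.Measure.volume_eq_prod]
    exact setIntegral_prod gfun (by rwa [← MeasureTheory.Measure.volume_eq_prod])
  rw [step2]
  -- inner integral via FTC
  have inner : ∀ s ∈ Set.Icc t₁ t₂, ∫ u in Set.Icc t₃ t₄, gfun (s, u)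
      = (-(Real.cos ((t₄-s)/2) / Real.sin ((t₄-s)/2)) / 2)
        - (-(Real.cos ((t₃-s)/2) / Real.sin ((t₃-s)/2)) / 2) := by
    intro s hs
    have huIcc : Set.uIcc t₃ t₄ = Set.Icc t₃ t₄ := Set.uIcc_of_le h34.le
    have hderiv : ∀ u ∈ Set.uIcc t₃ t₄,
        HasDerivAt (fun u => -(Real.cos ((u-s)/2) / Real.sin ((u-s)/2)) / 2) (gfun (s, u)) u := by
      intro u hu
      rw [huIcc] at hu
      have hsin := hsinpos s u hs hu
      have hφ : HasDerivAt (fun u : ℝ => (u - s)/2) (1/2) u :=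
        ((hasDerivAt_id u).sub_const s).div_const 2
      have hcos : HasDerivAt (fun u : ℝ => Real.cos ((u-s)/2)) (-Real.sin ((u-s)/2) * (1/2)) u := hφ.cos
      have hsin' : HasDerivAt (fun u : ℝ => Real.sin ((u-s)/2)) (Real.cos ((u-s)/2) * (1/2)) u := hφ.sin
      have hdiv := (hcos.div hsin' hsin.ne')
      have := (hdiv.neg).div_const 2
      refine this.congr_deriv ?_
      unfold gfun
      field_simp
      nlinarith [Real.sin_sq_add_cos_sq ((u-s)/2), hsin]
    have hintg : IntervalIntegrable (fun u => gfun (s, u)) volume t₃ t₄ := by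
      apply ContinuousOn.intervalIntegrable
      rw [huIcc]
      exact hgcont.comp (by fun_prop) (fun u hu => Set.mk_mem_prod hs hu)
    rw [MeasureTheory.integral_Icc_eq_integral_Ioc,
      ← intervalIntegral.integral_of_le h34.le,
      intervalIntegral.integral_eq_sub_of_hasDerivAt hderiv hintg]
  rw [setIntegral_congr_fun measurableSet_Icc inner]
  -- outer integral via FTC
  have hderiv2 : ∀ s ∈ Set.uIcc t₁ t₂,
      HasDerivAt (fun s => Real.log (Real.sin ((t₄-s)/2)) - Real.log (Real.sin ((t₃-s)/2)))
        ((-(Real.cos ((t₄-s)/2) / Real.sin ((t₄-s)/2)) / 2)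
          - (-(Real.cos ((t₃-s)/2) / Real.sin ((t₃-s)/2)) / 2)) s := by
    intro s hsu
    rw [Set.uIcc_of_le h12.le] at hsu
    have hsin4 : 0 < Real.sin ((t₄-s)/2) := sin_half_pos (by linarith [hsu.2]) (by linarith [hsu.1])
    have hsin3 : 0 < Real.sin ((t₃-s)/2) := sin_half_pos (by linarith [hsu.2]) (by linarith [hsu.1])
    have hφ4 : HasDerivAt (fun s : ℝ => (t₄ - s)/2) (-1/2) s := by
      simpa using (((hasDerivAt_id s).const_sub t₄).div_const 2)
    have hφ3 : HasDerivAt (fun s : ℝ => (t₃ - s)/2) (-1/2) s := by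
      simpa using (((hasDerivAt_id s).const_sub t₃).div_const 2)
    have h4 : HasDerivAt (fun s => Real.log (Real.sin ((t₄-s)/2)))
        ((Real.cos ((t₄-s)/2) * (-1/2)) / Real.sin ((t₄-s)/2)) s := (hφ4.sin).log hsin4.ne'
    have h3 : HasDerivAt (fun s => Real.log (Real.sin ((t₃-s)/2)))
        ((Real.cos ((t₃-s)/2) * (-1/2)) / Real.sin ((t₃-s)/2)) s := (hφ3.sin).log hsin3.ne'
    refine (h4.sub h3).congr_deriv ?_
    field_simp
  have hintg2 : IntervalIntegrable (fun s =>
      (-(Real.cos ((t₄-s)/2) / Real.sin ((t₄-s)/2)) / 2)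
        - (-(Real.cos ((t₃-s)/2) / Real.sin ((t₃-s)/2)) / 2)) volume t₁ t₂ := by
    apply ContinuousOn.intervalIntegrable
    rw [Set.uIcc_of_le h12.le]
    have c4 : ContinuousOn (fun s => Real.sin ((t₄-s)/2)) (Set.Icc t₁ t₂) := by fun_prop
    have c3 : ContinuousOn (fun s => Real.sin ((t₃-s)/2)) (Set.Icc t₁ t₂) := by fun_prop
    apply ContinuousOn.sub
    · apply ContinuousOn.div_const
      apply ContinuousOn.neg
      apply ContinuousOn.div (by fun_prop) c4
      intro s hsu
      exact (sin_half_pos (by linarith [hsu.2]) (by linarith [hsu.1])).ne'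
    · apply ContinuousOn.div_const
      apply ContinuousOn.neg
      apply ContinuousOn.div (by fun_prop) c3
      intro s hsu
      exact (sin_half_pos (by linarith [hsu.2]) (by linarith [hsu.1])).ne'
  rw [MeasureTheory.integral_Icc_eq_integral_Ioc, ← intervalIntegral.integral_of_le h12.le,
    intervalIntegral.integral_eq_sub_of_hasDerivAt hderiv2 hintg2]
  ring

/-- The Liouville measure of a box over a counterclockwise quadruple, in coordinates. -/
lemma liouville_box {t₁ t₂ t₃ t₄ : ℝ} (h12 : t₁ < t₂) (h23 : t₂ < t₃) (h34 : t₃ < t₄)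
    (h41 : t₄ < t₁ + 2*π) :
    liouville (boxSet (Circle.exp t₁) (Circle.exp t₂) (Circle.exp t₃) (Circle.exp t₄))
      = ENNReal.ofReal
      (Real.log (Real.sin ((t₃-t₁)/2)) + Real.log (Real.sin ((t₄-t₂)/2))
        - Real.log (Real.sin ((t₄-t₁)/2)) - Real.log (Real.sin ((t₃-t₂)/2))) := by
  have harc1 : arcCC (Circle.exp t₁) (Circle.exp t₂) = Circle.exp '' Set.Icc t₁ t₂ :=
    arc_eq_image rfl rfl h12.le (by linarith)
  have harc2 : arcCC (Circle.exp t₃) (Circle.exp t₄) = Circle.exp '' Set.Icc t₃ t₄ :=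
    arc_eq_image rfl rfl h34.le (by linarith)
  have hbox : boxSet (Circle.exp t₁) (Circle.exp t₂) (Circle.exp t₃) (Circle.exp t₄)
      = E2 '' (Set.Icc t₁ t₂ ×ˢ Set.Icc t₃ t₄) := by
    rw [boxSet, harc1, harc2, Set.prod_image_image_eq]; rfl
  rw [hbox, liouville_image h12.le (by linarith) h34.le (by linarith),
    mud_rect h12 h23 h34 h41]

/-- the Ptolemy-type identity for sines -/
lemma ptolemy (x₁ x₂ x₃ x₄ : ℝ) :
    Real.sin ((x₄-x₁)/2) * Real.sin ((x₃-x₂)/2) + Real.sin ((x₂-x₁)/2) * Real.sin ((x₄-x₃)/2)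
      = Real.sin ((x₃-x₁)/2) * Real.sin ((x₄-x₂)/2) := by
  rw [show (x₄-x₁)/2 = x₄/2 - x₁/2 by ring, show (x₃-x₂)/2 = x₃/2 - x₂/2 by ring,
    show (x₂-x₁)/2 = x₂/2 - x₁/2 by ring, show (x₄-x₃)/2 = x₄/2 - x₃/2 by ring,
    show (x₃-x₁)/2 = x₃/2 - x₁/2 by ring, show (x₄-x₂)/2 = x₄/2 - x₂/2 by ring]
  simp only [Real.sin_sub]
  ring

/-- the cross-ratio-type quantity built from chord lengths -/
def rho (A B C D : Circle) : ℝ :=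
  (‖(A:ℂ) - (D:ℂ)‖ * ‖(B:ℂ) - (C:ℂ)‖)
    / (‖(A:ℂ) - (C:ℂ)‖ * ‖(B:ℂ) - (D:ℂ)‖)

lemma chord_eq {x y : ℝ} (h0 : 0 < y - x) (h2 : y - x < 2*π) :
    ‖(Circle.exp x : ℂ) - (Circle.exp y : ℂ)‖ = 2 * Real.sin ((y-x)/2) := by
  rw [Circle.coe_exp, Circle.coe_exp]
  have hsq := chord_sq x y
  have hsin : 0 < Real.sin ((y-x)/2) := sin_half_pos h0 h2
  have hrw : Real.sin ((x-y)/2) ^ 2 = Real.sin ((y-x)/2) ^ 2 := by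
    rw [show (x-y)/2 = -((y-x)/2) by ring, Real.sin_neg]; ring
  have ha : (0:ℝ) ≤ ‖Complex.exp ((x:ℂ) * Complex.I) - Complex.exp ((y:ℂ) * Complex.I)‖ :=
    norm_nonneg _
  have h4 : ‖Complex.exp ((x:ℂ) * Complex.I) - Complex.exp ((y:ℂ) * Complex.I)‖ ^ 2
      = (2 * Real.sin ((y-x)/2)) ^ 2 := by rw [hsq, hrw]; ring
  calc ‖Complex.exp ((x:ℂ) * Complex.I) - Complex.exp ((y:ℂ) * Complex.I)‖
      = Real.sqrt (‖Complex.exp ((x:ℂ) * Complex.I) - Complex.exp ((y:ℂ) * Complex.I)‖ ^ 2) :=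
        (Real.sqrt_sq ha).symm
    _ = Real.sqrt ((2 * Real.sin ((y-x)/2)) ^ 2) := by rw [h4]
    _ = 2 * Real.sin ((y-x)/2) := Real.sqrt_sq (by positivity)

/-- the value of the Liouville measure of a box, together with the chord-length formula
for its exponential. -/
lemma box_val {A B C D : Circle} (h4 : Ccw4 A B C D) :
    ∃ x : ℝ, 0 < x ∧ liouville (boxSet A B C D) = ENNReal.ofReal x ∧
      Real.exp (-x) = rho A B C D := by
  obtain ⟨s₁, s₂, s₃, s₄, h12, h23, h34, h41, hA, hB, hC, hD⟩ := h4
  set a31 := Real.sin ((s₃-s₁)/2) with ha31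
  set a42 := Real.sin ((s₄-s₂)/2) with ha42
  set a41 := Real.sin ((s₄-s₁)/2) with ha41
  set a32 := Real.sin ((s₃-s₂)/2) with ha32
  set a21 := Real.sin ((s₂-s₁)/2) with ha21
  set a43 := Real.sin ((s₄-s₃)/2) with ha43
  have p31 : 0 < a31 := sin_half_pos (by linarith) (by linarith)
  have p42 : 0 < a42 := sin_half_pos (by linarith) (by linarith)
  have p41 : 0 < a41 := sin_half_pos (by linarith) (by linarith)
  have p32 : 0 < a32 := sin_half_pos (by linarith) (by linarith)
  have p21 : 0 < a21 := sin_half_pos (by linarith) (by linarith)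
  have p43 : 0 < a43 := sin_half_pos (by linarith) (by linarith)
  have hpt : a41 * a32 + a21 * a43 = a31 * a42 := ptolemy s₁ s₂ s₃ s₄
  refine ⟨Real.log a31 + Real.log a42 - Real.log a41 - Real.log a32, ?_, ?_, ?_⟩
  · -- positivity: exp(-x) < 1
    have hlt : a41 * a32 < a31 * a42 := by nlinarith
    have : Real.log (a41 * a32) < Real.log (a31 * a42) :=
      Real.log_lt_log (by positivity) hlt
    rw [Real.log_mul p41.ne' p32.ne', Real.log_mul p31.ne' p42.ne'] at this
    linarith
  · rw [hA, hB, hC, hD]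
    exact liouville_box h12 h23 h34 h41
  · have : Real.exp (-(Real.log a31 + Real.log a42 - Real.log a41 - Real.log a32))
        = (a41 * a32) / (a31 * a42) := by
      rw [show -(Real.log a31 + Real.log a42 - Real.log a41 - Real.log a32)
        = (Real.log a41 + Real.log a32) - (Real.log a31 + Real.log a42) by ring,
        Real.exp_sub, Real.exp_add, Real.exp_add, Real.exp_log p41, Real.exp_log p32,
        Real.exp_log p31, Real.exp_log p42]
    rw [this, rho, hA, hB, hC, hD]
    rw [chord_eq (by linarith : 0 < s₄ - s₁) (by linarith), chord_eq (by linarith : 0 < s₃ - s₂) (by linarith),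
      chord_eq (by linarith : 0 < s₃ - s₁) (by linarith), chord_eq (by linarith : 0 < s₄ - s₂) (by linarith)]
    rw [← ha31, ← ha42, ← ha41, ← ha32]
    field_simp

/-- complementarity identity -/
lemma rho_compl {A B C D : Circle} (h4 : Ccw4 A B C D) : rho A B C D + rho B C D A = 1 := by
  obtain ⟨s₁, s₂, s₃, s₄, h12, h23, h34, h41, hA, hB, hC, hD⟩ := h4
  have p31 : 0 < Real.sin ((s₃-s₁)/2) := sin_half_pos (by linarith) (by linarith)
  have p42 : 0 < Real.sin ((s₄-s₂)/2) := sin_half_pos (by linarith) (by linarith)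
  have p41 : 0 < Real.sin ((s₄-s₁)/2) := sin_half_pos (by linarith) (by linarith)
  have p32 : 0 < Real.sin ((s₃-s₂)/2) := sin_half_pos (by linarith) (by linarith)
  have p21 : 0 < Real.sin ((s₂-s₁)/2) := sin_half_pos (by linarith) (by linarith)
  have p43 : 0 < Real.sin ((s₄-s₃)/2) := sin_half_pos (by linarith) (by linarith)
  have hpt := ptolemy s₁ s₂ s₃ s₄
  rw [rho, rho, hA, hB, hC, hD]
  rw [norm_sub_rev ((Circle.exp s₂ : Circle) : ℂ) ((Circle.exp s₁ : Circle) : ℂ),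
    norm_sub_rev ((Circle.exp s₃ : Circle) : ℂ) ((Circle.exp s₁ : Circle) : ℂ)]
  rw [chord_eq (by linarith : 0 < s₄ - s₁) (by linarith),
    chord_eq (by linarith : 0 < s₃ - s₂) (by linarith),
    chord_eq (by linarith : 0 < s₃ - s₁) (by linarith),
    chord_eq (by linarith : 0 < s₄ - s₂) (by linarith),
    chord_eq (by linarith : 0 < s₂ - s₁) (by linarith),
    chord_eq (by linarith : 0 < s₄ - s₃) (by linarith)]
  field_simp
  linear_combination hpt

/-- pullback current of a box is the Liouville measure of the image box -/
lemma pullback_box {h : Circle ≃ₜ Circle} (hop : OrientationPreserving h) {a b c d : Circle}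
    (h4 : Ccw4 a b c d) :
    pullbackCurrent h (boxSet a b c d) = liouville (boxSet (h a) (h b) (h c) (h d)) := by
  obtain ⟨hab, -, -, -, -, hcd⟩ := ccw4_ne h4
  have hmeas : MeasurableSet (boxSet a b c d) :=
    ((arc_compact hab).measurableSet).prod ((arc_compact hcd).measurableSet)
  rw [pullbackCurrent, Measure.map_apply (Homeomorph.continuous _).measurable hmeas]
  congr 1
  ext p
  have happ : (h.prodCongr h).symm p = (h.symm p.1, h.symm p.2) := rfl
  simp only [Set.mem_preimage, happ, boxSet, Set.mem_prod]
  rw [← image_arc hop hab, ← image_arc hop hcd]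
  constructor
  · rintro ⟨hx, hy⟩
    exact ⟨⟨h.symm p.1, hx, h.apply_symm_apply p.1⟩, ⟨h.symm p.2, hy, h.apply_symm_apply p.2⟩⟩
  · rintro ⟨⟨w, hw, hw'⟩, ⟨v, hv, hv'⟩⟩
    constructor
    · rwa [← hw', h.symm_apply_apply]
    · rwa [← hv', h.symm_apply_apply]

lemma exp_ne_of_window {x y : ℝ} (hne : x ≠ y) (hcl : |x - y| < 2*π) :
    Circle.exp x ≠ Circle.exp y := fun h => hne (rep_unique h hcl)

lemma habs_ne {z w : Circle} (hzw : z ≠ w) : ‖(z:ℂ) - (w:ℂ)‖ ≠ 0 := by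
  simp only [ne_eq, norm_eq_zero, sub_eq_zero]
  exact fun hh => hzw (Circle.coe_injective hh)

lemma rho_continuousOn (F : ℝ → Circle) (hFc : Continuous F) (A B C : Circle) (S : Set ℝ)
    (hd1 : ∀ x ∈ S, ‖(A:ℂ) - (C:ℂ)‖ * ‖(B:ℂ) - ((F x : Circle):ℂ)‖ ≠ 0)
    (hd2 : ∀ x ∈ S, ‖(B:ℂ) - ((F x : Circle):ℂ)‖ * ‖(C:ℂ) - (A:ℂ)‖ ≠ 0) :
    ContinuousOn (fun x => rho A B C (F x) - rho B C (F x) A) S := by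
  have hcF : Continuous fun x => ((F x : Circle) : ℂ) := by fun_prop
  have c1 : Continuous fun x => ‖(A:ℂ) - ((F x : Circle):ℂ)‖ :=
    continuous_norm.comp (continuous_const.sub hcF)
  have c2 : Continuous fun x => ‖(B:ℂ) - ((F x : Circle):ℂ)‖ :=
    continuous_norm.comp (continuous_const.sub hcF)
  have c3 : Continuous fun x => ‖(C:ℂ) - ((F x : Circle):ℂ)‖ :=
    continuous_norm.comp (continuous_const.sub hcF)
  unfold rho
  exact ((c1.mul continuous_const).continuousOn.div
      ((continuous_const.mul c2).continuousOn) hd1).sub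
    (((continuous_const.mul c3).continuousOn).div
      ((c2.mul continuous_const).continuousOn) hd2)

/-- The intermediate value argument producing a balanced quadrilateral. -/
lemma exists_balanced (F : ℝ → Circle) (hFc : Continuous F) (A B C : Circle)
    (hAC : A ≠ C) (hAB : A ≠ B) (hBC : B ≠ C)
    (hBF : ∀ x ∈ Set.Icc π (2*π), B ≠ F x)
    (hFpi : F π = C) (hF2pi : F (2*π) = A) :
    ∃ x₀ : ℝ, π < x₀ ∧ x₀ < 2*π ∧ rho A B C (F x₀) = rho B C (F x₀) A := by
  have hπ := Real.pi_pos
  set G : ℝ → ℝ := fun x => rho A B C (F x) - rho B C (F x) A with hG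
  have hGc : ContinuousOn G (Set.Icc π (2*π)) := by
    apply rho_continuousOn F hFc A B C
    · intro x hx
      exact mul_ne_zero (habs_ne hAC) (habs_ne (hBF x hx))
    · intro x hx
      exact mul_ne_zero (habs_ne (hBF x hx)) (habs_ne hAC.symm)
  have hGpi : G π = 1 := by
    rw [hG]
    simp only [hFpi, rho]
    rw [sub_self ((C : Circle):ℂ), norm_zero, mul_zero, zero_div, sub_zero,
      div_self (mul_ne_zero (habs_ne hAC) (habs_ne hBC))]
  have hG2pi : G (2*π) = -1 := by
    rw [hG]
    simp only [hF2pi, rho]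
    rw [sub_self ((A : Circle):ℂ), norm_zero, zero_mul, zero_div,
      div_self (mul_ne_zero (habs_ne hAB.symm) (habs_ne hAC.symm))]
    ring
  have hmem : (0:ℝ) ∈ Set.Icc (G (2*π)) (G π) := by
    rw [hGpi, hG2pi]; constructor <;> norm_num
  obtain ⟨x₀, hx₀mem, hGx₀⟩ := intermediate_value_Icc' (by linarith : π ≤ 2*π) hGc hmem
  have hx₀l : π < x₀ := by
    rcases lt_or_eq_of_le hx₀mem.1 with h | h
    · exact h
    · exfalso; rw [← h, hGpi] at hGx₀; norm_num at hGx₀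
  have hx₀r : x₀ < 2*π := by
    rcases lt_or_eq_of_le hx₀mem.2 with h | h
    · exact h
    · exfalso; rw [h, hG2pi] at hGx₀; norm_num at hGx₀
  refine ⟨x₀, hx₀l, hx₀r, ?_⟩
  have : rho A B C (F x₀) - rho B C (F x₀) A = 0 := hGx₀
  linarith

end Stmt9

open Stmt9

local notation "π" => Real.pi

/-- if `L_{h₂} = t • L_{h₁}` with `t > 0` then `t = 1` and the two pullback
Liouville currents coincide. -/
theorem stmt9 (h₁ h₂ : Circle ≃ₜ Circle)
    (hop₁ : OrientationPreserving h₁) (hop₂ : OrientationPreserving h₂)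
    (t : ℝ) (ht : 0 < t)
    (heq : pullbackCurrent h₂ = ENNReal.ofReal t • pullbackCurrent h₁) :
    t = 1 ∧ pullbackCurrent h₁ = pullbackCurrent h₂ := by
  have hπ := Real.pi_pos
  -- basic distinctness of the sample points
  have h0pi : Circle.exp 0 ≠ Circle.exp π :=
    exp_ne_of_window (by intro hh; linarith) (by rw [zero_sub, abs_neg, abs_of_pos hπ]; linarith)
  have h0half : Circle.exp 0 ≠ Circle.exp (π/2) :=
    exp_ne_of_window (by intro hh; linarith)
      (by rw [zero_sub, abs_neg, abs_of_pos (by linarith : (0:ℝ) < π/2)]; linarith)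
  have hhalfpi : Circle.exp (π/2) ≠ Circle.exp π := by
    have e : π/2 - π = -(π/2) := by ring
    apply exp_ne_of_window (by intro hh; linarith)
    rw [e, abs_neg, abs_of_pos (by linarith : (0:ℝ) < π/2)]
    linarith
  have hBD : ∀ x ∈ Set.Icc π (2*π), Circle.exp (π/2) ≠ Circle.exp x := by
    intro x hx hcon
    obtain ⟨m, hm⟩ := Circle.exp_eq_exp.mp hcon
    have hub : (m:ℝ) * (2*π) ≤ -π/2 := by linarith [hx.1]
    have hlb : (-3)*π/2 ≤ (m:ℝ)*(2*π) := by linarith [hx.2]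
    have h1 : (m:ℝ) < 0 := by nlinarith
    have h2 : (-1:ℝ) < m := by nlinarith
    have h3 : (m:ℤ) < 0 := by exact_mod_cast h1
    have h4 : (-1:ℤ) < m := by exact_mod_cast h2
    omega
  -- the balanced quadrilateral for h₁
  obtain ⟨x₀, hx₀l, hx₀r, hbal⟩ := exists_balanced (fun x => h₁ (Circle.exp x))
    (h₁.continuous.comp Circle.exp.continuous)
    (h₁ (Circle.exp 0)) (h₁ (Circle.exp (π/2))) (h₁ (Circle.exp π))
    (fun hh => h0pi (h₁.injective hh)) (fun hh => h0half (h₁.injective hh))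
    (fun hh => hhalfpi (h₁.injective hh))
    (fun x hx hh => hBD x hx (h₁.injective hh))
    rfl
    (by show h₁ (Circle.exp (2*π)) = h₁ (Circle.exp 0)
        congr 1
        exact Circle.exp_eq_exp.mpr ⟨1, by push_cast; ring⟩)
  -- the quadruple
  have hq : Ccw4 (Circle.exp 0) (Circle.exp (π/2)) (Circle.exp π) (Circle.exp x₀) :=
    ⟨0, π/2, π, x₀, by linarith, by linarith, hx₀l, by linarith, rfl, rfl, rfl, rfl⟩
  have hq1 : Ccw4 (h₁ (Circle.exp 0)) (h₁ (Circle.exp (π/2))) (h₁ (Circle.exp π))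
      (h₁ (Circle.exp x₀)) := ccw4_map hop₁ hq
  obtain ⟨x, hxpos, hxval, hxexp⟩ := box_val hq1
  obtain ⟨y, hypos, hyval, hyexp⟩ := box_val (ccw4_rotate hq1)
  have hsum := rho_compl hq1
  have hrho1 : rho (h₁ (Circle.exp 0)) (h₁ (Circle.exp (π/2))) (h₁ (Circle.exp π))
      (h₁ (Circle.exp x₀)) = 1/2 := by linarith [hbal, hsum]
  have hrho2 : rho (h₁ (Circle.exp (π/2))) (h₁ (Circle.exp π)) (h₁ (Circle.exp x₀))
      (h₁ (Circle.exp 0)) = 1/2 := by linarith [hbal, hsum]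
  have hlog2 : ∀ {w : ℝ}, Real.exp (-w) = 1/2 → w = Real.log 2 := by
    intro w hw
    have := congrArg Real.log hw
    rw [Real.log_exp, one_div, Real.log_inv] at this
    linarith
  have hx2 : x = Real.log 2 := hlog2 (by rw [hxexp, hrho1])
  have hy2 : y = Real.log 2 := hlog2 (by rw [hyexp, hrho2])
  -- h₁ pullback values
  have e1 : pullbackCurrent h₁
      (boxSet (Circle.exp 0) (Circle.exp (π/2)) (Circle.exp π) (Circle.exp x₀))
      = ENNReal.ofReal (Real.log 2) := by
    rw [pullback_box hop₁ hq, ← hx2]; exact hxval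
  have e2 : pullbackCurrent h₁
      (boxSet (Circle.exp (π/2)) (Circle.exp π) (Circle.exp x₀) (Circle.exp 0))
      = ENNReal.ofReal (Real.log 2) := by
    rw [pullback_box hop₁ (ccw4_rotate hq), ← hy2]; exact hyval
  -- h₂ pullback values
  have hq2 : Ccw4 (h₂ (Circle.exp 0)) (h₂ (Circle.exp (π/2))) (h₂ (Circle.exp π))
      (h₂ (Circle.exp x₀)) := ccw4_map hop₂ hq
  obtain ⟨x', hx'pos, hx'val, hx'exp⟩ := box_val hq2
  obtain ⟨y', hy'pos, hy'val, hy'exp⟩ := box_val (ccw4_rotate hq2)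
  have hsum' := rho_compl hq2
  have f1 : pullbackCurrent h₂
      (boxSet (Circle.exp 0) (Circle.exp (π/2)) (Circle.exp π) (Circle.exp x₀))
      = ENNReal.ofReal x' := by rw [pullback_box hop₂ hq]; exact hx'val
  have f2 : pullbackCurrent h₂
      (boxSet (Circle.exp (π/2)) (Circle.exp π) (Circle.exp x₀) (Circle.exp 0))
      = ENNReal.ofReal y' := by rw [pullback_box hop₂ (ccw4_rotate hq)]; exact hy'val
  have hlog2pos : (0:ℝ) < Real.log 2 := Real.log_pos (by norm_num)
  have keyx : x' = t * Real.log 2 := by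
    have hh := f1.symm.trans (by
      rw [heq, Measure.smul_apply, smul_eq_mul, e1, ← ENNReal.ofReal_mul ht.le])
    exact (ENNReal.ofReal_eq_ofReal_iff hx'pos.le (by positivity)).mp hh
  have keyy : y' = t * Real.log 2 := by
    have hh := f2.symm.trans (by
      rw [heq, Measure.smul_apply, smul_eq_mul, e2, ← ENNReal.ofReal_mul ht.le])
    exact (ENNReal.ofReal_eq_ofReal_iff hy'pos.le (by positivity)).mp hh
  -- conclude t = 1
  have hxy' : x' = y' := by rw [keyx, keyy]
  have hrhoeq : rho (h₂ (Circle.exp 0)) (h₂ (Circle.exp (π/2))) (h₂ (Circle.exp π))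
        (h₂ (Circle.exp x₀))
      = rho (h₂ (Circle.exp (π/2))) (h₂ (Circle.exp π)) (h₂ (Circle.exp x₀))
        (h₂ (Circle.exp 0)) := by
    rw [← hx'exp, ← hy'exp, hxy']
  have hrr : rho (h₂ (Circle.exp 0)) (h₂ (Circle.exp (π/2))) (h₂ (Circle.exp π))
      (h₂ (Circle.exp x₀)) = 1/2 := by linarith [hsum', hrhoeq]
  have ht1 : t = 1 := by
    have hxlog : x' = Real.log 2 := hlog2 (by rw [hx'exp, hrr])
    rw [keyx] at hxlog
    have : (t - 1) * Real.log 2 = 0 := by linarith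
    rcases mul_eq_zero.mp this with h | h
    · linarith
    · exact absurd h hlog2pos.ne'
  refine ⟨ht1, ?_⟩
  rw [heq, ht1, ENNReal.ofReal_one, one_smul]
end
end

section
/- Let h_n (n ∈ ℕ) be orientation-preserving homeomorphisms of S¹, let t_n > 0 be real numbers with t_n → ∞, and let α be a Radon measure on G such that the measures (1/t_n)·L_{h_n} converge weak* to α. Then the support of α contains no pair of crossing geodesics: there do not exist points (a,c) and (b,d) in the support of α such that a, b, c, d are pairwise distinct and b, d lie in the two different connected components of S¹ ∖ {a, c}. -/
open MeasureTheory Filter Topology Set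
open scoped ENNReal

noncomputable section

section Aux

open Real



lemma int_mul_eq_zero {m : ℤ} (h1 : -(2*π) < (m:ℝ) * (2*π)) (h2 : (m:ℝ) * (2*π) < 2*π) :
    m = 0 := by
  have h1' : (-1 : ℝ) < m := by
    have := (mul_lt_mul_iff_of_pos_right Real.two_pi_pos).mp (by linarith : (-1:ℝ) * (2*π) < (m:ℝ)*(2*π))
    exact this
  have h2' : (m:ℝ) < 1 := by
    have := (mul_lt_mul_iff_of_pos_right Real.two_pi_pos).mp (by linarith : (m:ℝ)*(2*π) < (1:ℝ) * (2*π))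
    exact this
  have : (-1:ℤ) < m := by exact_mod_cast h1'
  have : m < 1 := by exact_mod_cast h2'
  omega

lemma rep_unique {t1 s t : ℝ} (h1 : t1 < s) (h2 : s < t1 + 2*π) (h3 : t1 < t)
    (h4 : t < t1 + 2*π) (he : Circle.exp s = Circle.exp t) : s = t := by
  obtain ⟨m, hm⟩ := Circle.exp_eq_exp.mp he
  have hm0 : m = 0 := int_mul_eq_zero (by linarith) (by linarith)
  simp [hm0] at hm; linarith

lemma arcCC_eq_image {v w : ℝ} (hvw : v ≤ w) (hw : w < v + 2*π) :
    arcCC (Circle.exp v) (Circle.exp w) = Circle.exp '' Set.Icc v w := by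
  ext z
  constructor
  · rintro ⟨t1, t, t2, htt1, htt2, hlt, ha, hz, hb⟩
    obtain ⟨m, hm⟩ := Circle.exp_eq_exp.mp ha.symm
    obtain ⟨k, hk⟩ := Circle.exp_eq_exp.mp hb.symm
    have : k = m := by
      have : (k - m : ℤ) = 0 := by
        refine int_mul_eq_zero ?_ ?_ <;> · push_cast; nlinarith
      omega
    subst this
    refine ⟨t - k * (2*π), ⟨by linarith, by linarith⟩, ?_⟩
    rw [hz]
    exact (Circle.exp_eq_exp.mpr ⟨k, by ring⟩).symm
  · rintro ⟨t, ⟨ht1, ht2⟩, rfl⟩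
    exact ⟨v, t, w, ht1, ht2, hw, rfl, rfl, rfl⟩

lemma mem_arc_iff {v w t : ℝ} (hvw : v ≤ w) (hw : w < v + 2*π) :
    Circle.exp t ∈ arcCC (Circle.exp v) (Circle.exp w) ↔
      ∃ m : ℤ, v + m * (2*π) ≤ t ∧ t ≤ w + m * (2*π) := by
  rw [arcCC_eq_image hvw hw]
  constructor
  · rintro ⟨s, ⟨hs1, hs2⟩, hs⟩
    obtain ⟨m, hm⟩ := Circle.exp_eq_exp.mp hs
    exact ⟨-m, by push_cast; linarith, by push_cast; linarith⟩
  · rintro ⟨m, h1, h2⟩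
    exact ⟨t - m * (2*π), ⟨by push_cast at h1 h2 ⊢; linarith, by push_cast at h1 h2 ⊢; linarith⟩,
      Circle.exp_eq_exp.mpr ⟨-m, by push_cast; ring⟩⟩

lemma isCompact_arc {v w : ℝ} (hvw : v ≤ w) (hw : w < v + 2*π) :
    IsCompact (arcCC (Circle.exp v) (Circle.exp w)) := by
  rw [arcCC_eq_image hvw hw]
  exact isCompact_Icc.image Circle.exp.continuous

lemma exists_exp_Ico (a : ℝ) (z : Circle) : ∃ t ∈ Set.Ico a (a + 2*π), z = Circle.exp t := by
  set t0 := Complex.arg z with ht0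
  set k : ℤ := ⌊(t0 - a) / (2*π)⌋ with hk
  have hfl : (k:ℝ) * (2*π) ≤ t0 - a :=
    (le_div_iff₀ Real.two_pi_pos).mp (Int.floor_le ((t0 - a) / (2*π)))
  have hfu : t0 - a < ((k:ℝ) + 1) * (2*π) :=
    (div_lt_iff₀ Real.two_pi_pos).mp (by exact_mod_cast Int.lt_floor_add_one ((t0 - a) / (2*π)))
  refine ⟨t0 - k * (2*π), ⟨by linarith, by linarith⟩, ?_⟩
  · rw [show z = Circle.exp t0 from (Circle.exp_arg z).symm]
    exact (Circle.exp_eq_exp.mpr ⟨-k, by push_cast; ring⟩).symm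

end Aux
section Arcs

open Real

/-- The open counterclockwise arc `(a,b)`, as complement of a closed arc. -/
def myOpenArc (a b : ℝ) : Set Circle :=
  (arcCC (Circle.exp b) (Circle.exp (a + 2*π)))ᶜ

lemma isOpen_myOpenArc {a b : ℝ} (hab : a < b) (hb : b < a + 2*π) :
    IsOpen (myOpenArc a b) :=
  isOpen_compl_iff.mpr (isCompact_arc (by linarith) (by linarith)).isClosed

lemma mem_myOpenArc {a b t : ℝ} (h1 : a < t) (h2 : t < b) (hb : b < a + 2*π) :
    Circle.exp t ∈ myOpenArc a b := by
  intro hmem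
  rw [mem_arc_iff (by linarith) (by linarith)] at hmem
  obtain ⟨m, hm1, hm2⟩ := hmem
  have hm0 : m = 0 := by
    refine int_mul_eq_zero ?_ ?_ <;> nlinarith [Real.two_pi_pos]
  simp [hm0] at hm1 hm2
  linarith

lemma myOpenArc_subset {a b : ℝ} (hab : a < b) (hb : b < a + 2*π) :
    myOpenArc a b ⊆ arcCC (Circle.exp a) (Circle.exp b) := by
  intro z hz
  obtain ⟨t, ⟨ht1, ht2⟩, rfl⟩ := exists_exp_Ico a z
  by_cases hcase : t ≤ b
  · rw [mem_arc_iff hab.le hb]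
    exact ⟨0, by simpa using ht1, by simpa using hcase⟩
  · exfalso
    apply hz
    rw [mem_arc_iff (by linarith) (by linarith)]
    exact ⟨0, by simp; linarith, by simp; linarith⟩

lemma arc_subset_myOpenArc {a b c d : ℝ} (hac : a < c) (hcd : c ≤ d) (hdb : d < b)
    (hb : b < a + 2*π) : arcCC (Circle.exp c) (Circle.exp d) ⊆ myOpenArc a b := by
  intro z hz hmem
  rw [arcCC_eq_image hcd (by linarith)] at hz
  obtain ⟨t, ⟨ht1, ht2⟩, rfl⟩ := hz
  rw [mem_arc_iff (by linarith) (by linarith)] at hmem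
  obtain ⟨m, hm1, hm2⟩ := hmem
  have hm0 : m = -1 ∨ m = 0 := by
    have l1 : (m:ℝ) * (2*π) < 2*π := by nlinarith [Real.two_pi_pos]
    have l2 : -(2*π) - 2*π < (m:ℝ) * (2*π) := by nlinarith [Real.two_pi_pos]
    have u1 : (m:ℝ) < 1 := by nlinarith [Real.two_pi_pos]
    have u2 : (-2:ℝ) < m := by nlinarith [Real.two_pi_pos]
    have : (-2:ℤ) < m := by exact_mod_cast u2
    have : m < 1 := by exact_mod_cast u1
    omega
  rcases hm0 with rfl | rfl <;> [skip; skip] <;>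
    · push_cast at hm1 hm2; linarith

end Arcs
section Ccw

open Real

lemma ccw3_of_reps {t1 t2 t3 : ℝ} (h12 : t1 < t2) (h23 : t2 < t3) (h31 : t3 < t1 + 2*π) :
    Ccw3 (Circle.exp t1) (Circle.exp t2) (Circle.exp t3) :=
  ⟨t1, t2, t3, h12, h23, h31, rfl, rfl, rfl⟩

lemma ccw3_shift {a b c : Circle} (h : Ccw3 a b c) {s1 : ℝ} (ha : a = Circle.exp s1) :
    ∃ s2 s3 : ℝ, s1 < s2 ∧ s2 < s3 ∧ s3 < s1 + 2*π ∧
      b = Circle.exp s2 ∧ c = Circle.exp s3 := by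
  obtain ⟨t1, t2, t3, h12, h23, h31, rfl, rfl, rfl⟩ := h
  obtain ⟨m, hm⟩ := Circle.exp_eq_exp.mp ha.symm
  refine ⟨t2 + m * (2*π), t3 + m * (2*π), by linarith, by linarith, by linarith, ?_, ?_⟩ <;>
    exact Circle.exp_eq_exp.mpr ⟨-m, by push_cast; ring⟩

lemma ccw_step {x y z : Circle} {v1 vy : ℝ} (hx : x = Circle.exp v1) (hy : y = Circle.exp vy)
    (h1 : v1 < vy) (h2 : vy < v1 + 2*π) (hc : Ccw3 x y z) :
    ∃ vz : ℝ, vy < vz ∧ vz < v1 + 2*π ∧ z = Circle.exp vz := by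
  obtain ⟨s2, s3, hs1, hs2, hs3, hb, hcz⟩ := ccw3_shift hc hx
  have : s2 = vy := rep_unique hs1 (by linarith) h1 h2 (hb.symm.trans hy)
  subst this
  exact ⟨s3, hs2, hs3, hcz⟩

lemma ccw4_rotate {a b c d : Circle} (h : Ccw4 a b c d) : Ccw4 b c d a := by
  obtain ⟨t1, t2, t3, t4, h12, h23, h34, h41, rfl, rfl, rfl, rfl⟩ := h
  exact ⟨t2, t3, t4, t1 + 2*π, h23, h34, h41, by linarith,
    rfl, rfl, rfl, (Circle.exp_add_two_pi t1).symm⟩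

/-- An orientation-preserving homeomorphism maps a (short enough) closed arc into the
closed arc between the images of the endpoints. -/
lemma image_arc_subset {h : Circle ≃ₜ Circle} (hor : OrientationPreserving h)
    {a b A B : ℝ} (hab : a < b) (hb : b < a + 2*π)
    (hA : h (Circle.exp a) = Circle.exp A) (hB : h (Circle.exp b) = Circle.exp B)
    (hAB : A < B) (hBA : B < A + 2*π) :
    ∀ z ∈ arcCC (Circle.exp a) (Circle.exp b),
      h z ∈ arcCC (Circle.exp A) (Circle.exp B) := by
  intro z hz
  rw [arcCC_eq_image hab.le hb] at hz
  obtain ⟨t, ⟨ht1, ht2⟩, rfl⟩ := hz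
  rw [arcCC_eq_image hAB.le hBA]
  rcases eq_or_lt_of_le ht1 with rfl | ht1'
  · exact ⟨A, ⟨le_refl A, hAB.le⟩, hA.symm ▸ rfl⟩
  rcases eq_or_lt_of_le ht2 with rfl | ht2'
  · exact ⟨B, ⟨hAB.le, le_refl B⟩, hB.symm ▸ rfl⟩
  have hc : Ccw3 (h (Circle.exp a)) (h (Circle.exp t)) (h (Circle.exp b)) :=
    hor _ _ _ (ccw3_of_reps ht1' ht2' (by linarith))
  obtain ⟨s2, s3, hs1, hs2, hs3, himz, himb⟩ := ccw3_shift hc hA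
  have : s3 = B := rep_unique (by linarith) hs3 hAB hBA (himb.symm.trans hB)
  subst this
  exact ⟨s2, ⟨hs1.le, hs2.le⟩, himz.symm⟩

end Ccw
section Analytic

open Real

/-- The density of the Liouville measure, as a real function. -/
def gdens (p : ℝ × ℝ) : ℝ :=
  1 / ‖Complex.exp ((p.1 : ℂ) * Complex.I) -
      Complex.exp ((p.2 : ℂ) * Complex.I)‖ ^ 2

lemma gdens_nonneg (p : ℝ × ℝ) : 0 ≤ gdens p := by unfold gdens; positivity

lemma chordsq (s u : ℝ) :
    ‖Complex.exp ((s : ℂ) * Complex.I) - Complex.exp ((u : ℂ) * Complex.I)‖ ^ 2 =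
      4 * Real.sin ((u - s)/2) ^ 2 := by
  rw [← Complex.normSq_eq_norm_sq, Complex.normSq_apply, Complex.sub_re, Complex.sub_im,
    Complex.exp_ofReal_mul_I_re, Complex.exp_ofReal_mul_I_im,
    Complex.exp_ofReal_mul_I_re, Complex.exp_ofReal_mul_I_im]
  have h1 : Real.sin ((u - s)/2) ^ 2 = (1 - Real.cos (u - s)) / 2 := by
    have hc := Real.cos_sq ((u - s)/2)
    have hs := Real.sin_sq_add_cos_sq ((u - s)/2)
    rw [show 2 * ((u - s)/2) = u - s by ring] at hc
    linarith
  rw [h1, Real.cos_sub]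
  nlinarith [Real.sin_sq_add_cos_sq s, Real.sin_sq_add_cos_sq u]

lemma gdens_eq {s u : ℝ} : gdens (s, u) = 1 / (4 * Real.sin ((u - s)/2) ^ 2) := by
  unfold gdens; rw [chordsq]

lemma sin_half_pos {x : ℝ} (h1 : 0 < x) (h2 : x < 2*π) : 0 < Real.sin (x/2) :=
  Real.sin_pos_of_pos_of_lt_pi (by linarith) (by linarith)

/-- The log cross ratio of a box. -/
def LF (w1 w2 w3 w4 : ℝ) : ℝ :=
  (Real.log (Real.sin ((w4 - w2)/2)) - Real.log (Real.sin ((w3 - w2)/2))) -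
    (Real.log (Real.sin ((w4 - w1)/2)) - Real.log (Real.sin ((w3 - w1)/2)))

lemma gdens_continuousOn {w1 w2 w3 w4 : ℝ} (h23 : w2 < w3) (h41 : w4 < w1 + 2*π) :
    ContinuousOn gdens (Set.Icc w1 w2 ×ˢ Set.Icc w3 w4) := by
  have hcont : Continuous fun p : ℝ × ℝ =>
      ‖Complex.exp ((p.1 : ℂ) * Complex.I) -
        Complex.exp ((p.2 : ℂ) * Complex.I)‖ ^ 2 := by
    apply Continuous.pow
    apply continuous_norm.comp
    exact (Complex.continuous_exp.comp
        ((Complex.continuous_ofReal.comp continuous_fst).mul continuous_const)).sub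
      (Complex.continuous_exp.comp
        ((Complex.continuous_ofReal.comp continuous_snd).mul continuous_const))
  apply ContinuousOn.div continuousOn_const hcont.continuousOn
  · rintro ⟨s, u⟩ ⟨⟨hs1, hs2⟩, ⟨hu1, hu2⟩⟩
    have := sin_half_pos (show (0:ℝ) < u - s by simp at hs2 hu1 ⊢; linarith)
      (show u - s < 2*π by simp at hs1 hu2 ⊢; linarith)
    simp only [chordsq]
    positivity

lemma gdens_integrableOn {w1 w2 w3 w4 : ℝ} (h23 : w2 < w3) (h41 : w4 < w1 + 2*π) :
    MeasureTheory.IntegrableOn gdens (Set.Icc w1 w2 ×ˢ Set.Icc w3 w4) := by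
  exact (gdens_continuousOn h23 h41).integrableOn_compact (isCompact_Icc.prod isCompact_Icc)

end Analytic
section FTC

open Real MeasureTheory

/-- Inner antiderivative. -/
def myH (s u : ℝ) : ℝ := -Real.cos ((u - s)/2) / (2 * Real.sin ((u - s)/2))

lemma myH_hasDerivAt {s u : ℝ} (h1 : 0 < u - s) (h2 : u - s < 2*π) :
    HasDerivAt (fun v => myH s v) (gdens (s, u)) u := by
  have hsin : 0 < Real.sin ((u - s)/2) := sin_half_pos h1 h2
  have hlin : HasDerivAt (fun v : ℝ => (v - s)/2) (1/2) u :=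
    ((hasDerivAt_id u).sub_const s).div_const 2
  have hcos : HasDerivAt (fun v => -Real.cos ((v - s)/2)) (Real.sin ((u - s)/2) * (1/2)) u := by
    have := ((Real.hasDerivAt_cos ((u - s)/2)).comp u hlin).neg
    simpa [Function.comp_def, Pi.neg_def] using this
  have hsin' : HasDerivAt (fun v => 2 * Real.sin ((v - s)/2))
      (2 * (Real.cos ((u - s)/2) * (1/2))) u :=
    by have := ((Real.hasDerivAt_sin ((u - s)/2)).comp u hlin).const_mul 2; exact this
  have hdiv := hcos.div hsin' (by positivity)
  refine hdiv.congr_deriv ?_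
  rw [gdens_eq]
  have hpy := Real.sin_sq_add_cos_sq ((u - s)/2)
  field_simp
  nlinarith [hpy]

lemma inner_integral {w1 w2 w3 w4 s : ℝ} (h12 : w1 < w2) (h23 : w2 < w3) (h34 : w3 < w4)
    (h41 : w4 < w1 + 2*π) (hs : s ∈ Set.Icc w1 w2) :
    ∫ u in Set.Icc w3 w4, gdens (s, u) = myH s w4 - myH s w3 := by
  obtain ⟨hs1, hs2⟩ := hs
  have hint : IntervalIntegrable (fun u => gdens (s, u)) volume w3 w4 := by
    apply ContinuousOn.intervalIntegrable
    rw [Set.uIcc_of_le h34.le]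
    have : ContinuousOn (fun u : ℝ => gdens (s, u)) (Set.Icc w3 w4) := by
      apply (gdens_continuousOn h23 h41).comp
        (Continuous.continuousOn (by fun_prop : Continuous fun u : ℝ => ((s, u) : ℝ × ℝ)))
      intro u hu
      exact ⟨⟨hs1, hs2⟩, hu⟩
    exact this
  rw [MeasureTheory.integral_Icc_eq_integral_Ioc, ← intervalIntegral.integral_of_le h34.le]
  apply intervalIntegral.integral_eq_sub_of_hasDerivAt
  · intro u hu
    rw [Set.uIcc_of_le h34.le] at hu
    exact myH_hasDerivAt (by rcases hu with ⟨h1, h2⟩; linarith)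
      (by rcases hu with ⟨h1, h2⟩; linarith)
  · exact hint

lemma integral_gdens {w1 w2 w3 w4 : ℝ} (h12 : w1 < w2) (h23 : w2 < w3) (h34 : w3 < w4)
    (h41 : w4 < w1 + 2*π) :
    ∫ p in Set.Icc w1 w2 ×ˢ Set.Icc w3 w4, gdens p = LF w1 w2 w3 w4 := by
  have hint := gdens_integrableOn (w1 := w1) (w4 := w4) h23 h41
  rw [MeasureTheory.Measure.volume_eq_prod] at hint ⊢
  rw [MeasureTheory.setIntegral_prod _ hint]
  rw [MeasureTheory.setIntegral_congr_fun measurableSet_Icc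
    (fun s hs => inner_integral h12 h23 h34 h41 hs)]
  -- outer FTC
  have houter : ∀ s ∈ Set.uIcc w1 w2,
      HasDerivAt (fun s => Real.log (Real.sin ((w4 - s)/2)) - Real.log (Real.sin ((w3 - s)/2)))
        (myH s w4 - myH s w3) s := by
    intro s hs
    rw [Set.uIcc_of_le h12.le] at hs
    obtain ⟨hs1, hs2⟩ := hs
    have hkey : ∀ c : ℝ, 0 < c - s → c - s < 2*π →
        HasDerivAt (fun s => Real.log (Real.sin ((c - s)/2))) (myH s c) s := by
      intro c hc1 hc2
      have hsin : 0 < Real.sin ((c - s)/2) := sin_half_pos hc1 hc2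
      have hlin : HasDerivAt (fun x : ℝ => (c - x)/2) (-1/2) s := by
        have := ((hasDerivAt_id s).const_sub c).div_const 2
        simpa using this
      have hsin' : HasDerivAt (fun x => Real.sin ((c - x)/2))
          (Real.cos ((c - s)/2) * (-1/2)) s :=
        by have := (Real.hasDerivAt_sin ((c - s)/2)).comp s hlin; exact this
      have hlog := (Real.hasDerivAt_log hsin.ne').comp s hsin'
      refine hlog.congr_deriv ?_
      have h2 : (Real.sin ((c - s)/2))⁻¹ * Real.sin ((c - s)/2) = 1 :=
        inv_mul_cancel₀ hsin.ne'
      have heq : (Real.sin ((c - s)/2))⁻¹ * (Real.cos ((c - s)/2) * (-1/2))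
          = -Real.cos ((c - s)/2) / (2 * Real.sin ((c - s)/2)) := by
        rw [eq_div_iff (by positivity : (2:ℝ) * Real.sin ((c - s)/2) ≠ 0)]
        linear_combination (-Real.cos ((c - s)/2)) * h2
      unfold myH
      exact heq
    exact (hkey w4 (by linarith) (by linarith)).sub (hkey w3 (by linarith) (by linarith))
  have hintK : IntervalIntegrable (fun s => myH s w4 - myH s w3) volume w1 w2 := by
    apply ContinuousOn.intervalIntegrable
    rw [Set.uIcc_of_le h12.le]
    have hc : ∀ c : ℝ, w3 ≤ c → c ≤ w4 →
        ContinuousOn (fun s => myH s c) (Set.Icc w1 w2) := by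
      intro c hc1 hc2
      apply ContinuousOn.div
      · fun_prop
      · fun_prop
      · intro s hs
        have : 0 < Real.sin ((c - s)/2) :=
          sin_half_pos (by rcases hs with ⟨h1', h2'⟩; linarith)
            (by rcases hs with ⟨h1', h2'⟩; linarith)
        positivity
    exact (hc w4 h34.le le_rfl).sub (hc w3 le_rfl h34.le)
  rw [MeasureTheory.integral_Icc_eq_integral_Ioc, ← intervalIntegral.integral_of_le h12.le,
    intervalIntegral.integral_eq_sub_of_hasDerivAt houter hintK]
  unfold LF
  ring

end FTC
section MinLemma

open Real MeasureTheory

lemma LF_nonneg_integral {w1 w2 w3 w4 : ℝ} (h12 : w1 < w2) (h23 : w2 < w3) (h34 : w3 < w4)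
    (h41 : w4 < w1 + 2*π) : 0 ≤ LF w1 w2 w3 w4 := by
  rw [← integral_gdens h12 h23 h34 h41]
  exact MeasureTheory.setIntegral_nonneg (measurableSet_Icc.prod measurableSet_Icc)
    (fun p _ => gdens_nonneg p)

lemma LF_mono {w1 w2 w3 w4 W1 W2 W3 W4 : ℝ}
    (H12 : W1 < W2) (H23 : W2 < W3) (H34 : W3 < W4) (H41 : W4 < W1 + 2*π)
    (e1 : W1 ≤ w1) (e2 : w1 < w2) (e3 : w2 ≤ W2) (e4 : W3 ≤ w3) (e5 : w3 < w4) (e6 : w4 ≤ W4) :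
    LF w1 w2 w3 w4 ≤ LF W1 W2 W3 W4 := by
  rw [← integral_gdens e2 (by linarith) e5 (by linarith),
      ← integral_gdens H12 H23 H34 H41]
  apply MeasureTheory.setIntegral_mono_set (gdens_integrableOn H23 H41)
    (Filter.Eventually.of_forall (fun p => gdens_nonneg p))
  exact ((Set.prod_mono (Set.Icc_subset_Icc e1 e3) (Set.Icc_subset_Icc e4 e6)).eventuallyLE)

lemma sin_ptolemy (a b c d : ℝ) :
    Real.sin (c - b) * Real.sin (d - a) + Real.sin (b - a) * Real.sin (d - c) =
      Real.sin (c - a) * Real.sin (d - b) := by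
  simp only [Real.sin_sub]
  ring

lemma LF_eq_log {w1 w2 w3 w4 : ℝ} (h12 : w1 < w2) (h23 : w2 < w3) (h34 : w3 < w4)
    (h41 : w4 < w1 + 2*π) :
    LF w1 w2 w3 w4 = Real.log (Real.sin ((w4 - w2)/2) * Real.sin ((w3 - w1)/2) /
      (Real.sin ((w3 - w2)/2) * Real.sin ((w4 - w1)/2))) := by
  have hA : 0 < Real.sin ((w4 - w2)/2) := sin_half_pos (by linarith) (by linarith)
  have hB : 0 < Real.sin ((w3 - w1)/2) := sin_half_pos (by linarith) (by linarith)
  have hC : 0 < Real.sin ((w3 - w2)/2) := sin_half_pos (by linarith) (by linarith)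
  have hD : 0 < Real.sin ((w4 - w1)/2) := sin_half_pos (by linarith) (by linarith)
  rw [Real.log_div (by positivity) (by positivity), Real.log_mul hA.ne' hB.ne',
    Real.log_mul hC.ne' hD.ne']
  unfold LF
  ring

lemma log_min_aux {A B C D E F : ℝ} (hA : 0 < A) (hB : 0 < B) (hC : 0 < C) (hD : 0 < D)
    (hE : 0 < E) (hF : 0 < F) (ptol : C * D + E * F = B * A)
    (hX : Real.log 2 < Real.log (A * B / (C * D)))
    (hY : Real.log 2 < Real.log (A * B / (E * F))) : False := by
  have h2X : (2:ℝ) < A * B / (C * D) :=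
    (Real.log_lt_log_iff (by norm_num) (by positivity : (0:ℝ) < A * B / (C * D))).mp hX
  have h2Y : (2:ℝ) < A * B / (E * F) :=
    (Real.log_lt_log_iff (by norm_num) (by positivity : (0:ℝ) < A * B / (E * F))).mp hY
  rw [lt_div_iff₀ (by positivity)] at h2X h2Y
  nlinarith

lemma min_LF {u1 u2 u3 u4 : ℝ} (h12 : u1 < u2) (h23 : u2 < u3) (h34 : u3 < u4)
    (h41 : u4 < u1 + 2*π) :
    LF u1 u2 u3 u4 ≤ Real.log 2 ∨ LF u2 u3 u4 (u1 + 2*π) ≤ Real.log 2 := by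
  by_contra hcon
  push_neg at hcon
  obtain ⟨hX, hY⟩ := hcon
  rw [LF_eq_log h12 h23 h34 h41] at hX
  rw [LF_eq_log h23 h34 h41 (by linarith)] at hY
  have hs1 : Real.sin ((u1 + 2*π - u3)/2) = Real.sin ((u3 - u1)/2) := by
    rw [show (u1 + 2*π - u3)/2 = (u1 - u3)/2 + π by ring, Real.sin_add_pi,
      show (u1 - u3)/2 = -((u3 - u1)/2) by ring, Real.sin_neg, neg_neg]
  have hs2 : Real.sin ((u1 + 2*π - u2)/2) = Real.sin ((u2 - u1)/2) := by
    rw [show (u1 + 2*π - u2)/2 = (u1 - u2)/2 + π by ring, Real.sin_add_pi,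
      show (u1 - u2)/2 = -((u2 - u1)/2) by ring, Real.sin_neg, neg_neg]
  rw [hs1, hs2] at hY
  rw [show Real.sin ((u3 - u1)/2) * Real.sin ((u4 - u2)/2) /
      (Real.sin ((u4 - u3)/2) * Real.sin ((u2 - u1)/2)) =
      Real.sin ((u4 - u2)/2) * Real.sin ((u3 - u1)/2) /
      (Real.sin ((u2 - u1)/2) * Real.sin ((u4 - u3)/2)) by ring] at hY
  have ptol : Real.sin ((u3 - u2)/2) * Real.sin ((u4 - u1)/2) +
      Real.sin ((u2 - u1)/2) * Real.sin ((u4 - u3)/2) =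
      Real.sin ((u3 - u1)/2) * Real.sin ((u4 - u2)/2) := by
    rw [show (u3 - u2)/2 = u3/2 - u2/2 by ring, show (u4 - u1)/2 = u4/2 - u1/2 by ring,
      show (u2 - u1)/2 = u2/2 - u1/2 by ring, show (u4 - u3)/2 = u4/2 - u3/2 by ring,
      show (u3 - u1)/2 = u3/2 - u1/2 by ring, show (u4 - u2)/2 = u4/2 - u2/2 by ring]
    exact sin_ptolemy (u1/2) (u2/2) (u3/2) (u4/2)
  refine log_min_aux (sin_half_pos (by linarith) (by linarith) :
      0 < Real.sin ((u4 - u2)/2))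
    (sin_half_pos (by linarith) (by linarith) : 0 < Real.sin ((u3 - u1)/2))
    (sin_half_pos (by linarith) (by linarith) : 0 < Real.sin ((u3 - u2)/2))
    (sin_half_pos (by linarith) (by linarith) : 0 < Real.sin ((u4 - u1)/2))
    (sin_half_pos (by linarith) (by linarith) : 0 < Real.sin ((u2 - u1)/2))
    (sin_half_pos (by linarith) (by linarith) : 0 < Real.sin ((u4 - u3)/2))
    ptol ?_ ?_
  · exact hX
  · exact hY

end MinLemma
section MeasureBound

open Real MeasureTheory

lemma cexp_per (x : ℝ) (k : ℤ) :
    Complex.exp ((↑(x + k*(2*π)) : ℂ) * Complex.I) = Complex.exp ((x:ℂ) * Complex.I) := by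
  push_cast
  rw [add_mul, Complex.exp_add]
  have : ((k:ℂ) * (2*(π:ℂ))) * Complex.I = (k:ℂ) * (2*(π:ℂ)*Complex.I) := by ring
  rw [this, Complex.exp_int_mul_two_pi_mul_I]
  ring

lemma gdens_periodic (k l : ℤ) (p : ℝ × ℝ) :
    gdens (p.1 + k*(2*π), p.2 + l*(2*π)) = gdens p := by
  unfold gdens
  simp only [cexp_per]

/-- The base measure `ν = gdens · Leb` on `ℝ²`. -/
def nuMeas : Measure (ℝ × ℝ) :=
  (volume : Measure (ℝ × ℝ)).withDensity (fun p => ENNReal.ofReal (gdens p))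

instance : MeasureTheory.Measure.IsAddRightInvariant (volume : Measure (ℝ × ℝ)) := by
  rw [show (volume : Measure (ℝ × ℝ)) = (volume : Measure ℝ).prod volume from
    MeasureTheory.Measure.volume_eq_prod ℝ ℝ]
  infer_instance

lemma gdens_measurable : Measurable (fun p : ℝ × ℝ => ENNReal.ofReal (gdens p)) := by
  apply ENNReal.measurable_ofReal.comp
  unfold gdens
  have hcont : Continuous fun p : ℝ × ℝ =>
      ‖Complex.exp ((p.1 : ℂ) * Complex.I) -
        Complex.exp ((p.2 : ℂ) * Complex.I)‖ ^ 2 := by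
    apply Continuous.pow
    apply continuous_norm.comp
    exact (Complex.continuous_exp.comp
        ((Complex.continuous_ofReal.comp continuous_fst).mul continuous_const)).sub
      (Complex.continuous_exp.comp
        ((Complex.continuous_ofReal.comp continuous_snd).mul continuous_const))
  exact (measurable_const.div hcont.measurable)

lemma nuMeas_rect (u1 u2 u3 u4 : ℝ) (k l : ℤ) :
    nuMeas (Set.Icc (u1 + k*(2*π)) (u2 + k*(2*π)) ×ˢ Set.Icc (u3 + l*(2*π)) (u4 + l*(2*π))) =
      nuMeas (Set.Icc u1 u2 ×ˢ Set.Icc u3 u4) := by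
  set c : ℝ × ℝ := (k*(2*π), l*(2*π)) with hc
  have hmeasR : MeasurableSet (Set.Icc (u1 + k*(2*π)) (u2 + k*(2*π)) ×ˢ
      Set.Icc (u3 + l*(2*π)) (u4 + l*(2*π))) := (measurableSet_Icc.prod measurableSet_Icc)
  have hmeas0 : MeasurableSet (Set.Icc u1 u2 ×ˢ Set.Icc u3 u4) :=
    (measurableSet_Icc.prod measurableSet_Icc)
  unfold nuMeas
  rw [MeasureTheory.withDensity_apply _ hmeasR, MeasureTheory.withDensity_apply _ hmeas0,
    ← MeasureTheory.lintegral_indicator hmeasR, ← MeasureTheory.lintegral_indicator hmeas0]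
  have key : ∀ p : ℝ × ℝ,
      (Set.Icc u1 u2 ×ˢ Set.Icc u3 u4).indicator (fun q => ENNReal.ofReal (gdens q)) p =
      ((Set.Icc (u1 + k*(2*π)) (u2 + k*(2*π)) ×ˢ Set.Icc (u3 + l*(2*π)) (u4 + l*(2*π))).indicator
        (fun q => ENNReal.ofReal (gdens q))) (p + c) := by
    intro p
    have hmem : p + c ∈ Set.Icc (u1 + k*(2*π)) (u2 + k*(2*π)) ×ˢ
        Set.Icc (u3 + l*(2*π)) (u4 + l*(2*π)) ↔ p ∈ Set.Icc u1 u2 ×ˢ Set.Icc u3 u4 := by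
      simp only [Set.mem_prod, Set.mem_Icc, hc, Prod.fst_add, Prod.snd_add]
      constructor <;> (rintro ⟨⟨a1, a2⟩, ⟨a3, a4⟩⟩; exact ⟨⟨by linarith, by linarith⟩,
        ⟨by linarith, by linarith⟩⟩)
    have hval : gdens (p + c) = gdens p := by
      have := gdens_periodic k l p
      exact this
    by_cases hp : p ∈ Set.Icc u1 u2 ×ˢ Set.Icc u3 u4
    · rw [Set.indicator_of_mem hp, Set.indicator_of_mem (hmem.mpr hp), hval]
    · rw [Set.indicator_of_notMem hp, Set.indicator_of_notMem (fun hmem' => hp (hmem.mp hmem'))]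
  calc ∫⁻ p, (Set.Icc (u1 + k*(2*π)) (u2 + k*(2*π)) ×ˢ
        Set.Icc (u3 + l*(2*π)) (u4 + l*(2*π))).indicator
        (fun q => ENNReal.ofReal (gdens q)) p
      = ∫⁻ p, (Set.Icc (u1 + k*(2*π)) (u2 + k*(2*π)) ×ˢ
        Set.Icc (u3 + l*(2*π)) (u4 + l*(2*π))).indicator
        (fun q => ENNReal.ofReal (gdens q)) (p + c) :=
        (MeasureTheory.lintegral_add_right_eq_self _ c).symm
    _ = ∫⁻ p, (Set.Icc u1 u2 ×ˢ Set.Icc u3 u4).indicator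
        (fun q => ENNReal.ofReal (gdens q)) p := by
        congr 1; ext p; rw [key p]

lemma nuMeas_R00 {u1 u2 u3 u4 : ℝ} (h12 : u1 < u2) (h23 : u2 < u3) (h34 : u3 < u4)
    (h41 : u4 < u1 + 2*π) :
    nuMeas (Set.Icc u1 u2 ×ˢ Set.Icc u3 u4) = ENNReal.ofReal (LF u1 u2 u3 u4) := by
  unfold nuMeas
  rw [MeasureTheory.withDensity_apply _ (measurableSet_Icc.prod measurableSet_Icc)]
  rw [← MeasureTheory.ofReal_integral_eq_lintegral_ofReal
    (gdens_integrableOn h23 h41) (Filter.Eventually.of_forall (fun p => gdens_nonneg p))]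
  rw [integral_gdens h12 h23 h34 h41]

end MeasureBound
section BoxBound

open Real MeasureTheory

lemma exp_pair_measurable :
    Measurable (fun p : ℝ × ℝ => (Circle.exp p.1, Circle.exp p.2)) :=
  ((Circle.exp.continuous.comp continuous_fst).prodMk
    (Circle.exp.continuous.comp continuous_snd)).measurable

lemma measurableSet_boxSet {u1 u2 u3 u4 : ℝ} (h12 : u1 ≤ u2) (h21 : u2 < u1 + 2*π)
    (h34 : u3 ≤ u4) (h43 : u4 < u3 + 2*π) :
    MeasurableSet (boxSet (Circle.exp u1) (Circle.exp u2) (Circle.exp u3) (Circle.exp u4)) :=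
  ((isCompact_arc h12 h21).isClosed.measurableSet).prod
    ((isCompact_arc h34 h43).isClosed.measurableSet)

lemma liouville_box_le_core {u1 u2 u3 u4 : ℝ} (h0 : 0 ≤ u1) (hlt : u1 < 2*π)
    (h12 : u1 < u2) (h23 : u2 < u3) (h34 : u3 < u4) (h41 : u4 < u1 + 2*π) :
    liouville (boxSet (Circle.exp u1) (Circle.exp u2) (Circle.exp u3) (Circle.exp u4)) ≤
      4 * ENNReal.ofReal (LF u1 u2 u3 u4) := by
  have hbox := measurableSet_boxSet h12.le (by linarith) h34.le (by linarith)
    (u1 := u1) (u2 := u2) (u3 := u3) (u4 := u4)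
  unfold liouville
  rw [Measure.map_apply exp_pair_measurable hbox]
  rw [MeasureTheory.withDensity_apply _ (exp_pair_measurable hbox)]
  rw [Measure.restrict_restrict (exp_pair_measurable hbox)]
  set S := (fun p : ℝ × ℝ => (Circle.exp p.1, Circle.exp p.2)) ⁻¹'
    (boxSet (Circle.exp u1) (Circle.exp u2) (Circle.exp u3) (Circle.exp u4)) ∩
    (Set.Ico 0 (2*π) ×ˢ Set.Ico 0 (2*π)) with hS
  have hSmeas : MeasurableSet S := (exp_pair_measurable hbox).inter
    ((measurableSet_Ico).prod measurableSet_Ico)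
  have hback : ∫⁻ p in S, ENNReal.ofReal
      (1 / ‖Complex.exp ((p.1:ℂ) * Complex.I) -
        Complex.exp ((p.2:ℂ) * Complex.I)‖ ^ 2) ∂volume = nuMeas S := by
    unfold nuMeas
    rw [MeasureTheory.withDensity_apply _ hSmeas]
    rfl
  rw [hback]
  -- cover S by four rectangles
  have hcover : S ⊆
      (Set.Icc (u1 + (0:ℤ)*(2*π)) (u2 + (0:ℤ)*(2*π)) ×ˢ Set.Icc (u3 + (0:ℤ)*(2*π)) (u4 + (0:ℤ)*(2*π))) ∪
      (Set.Icc (u1 + (0:ℤ)*(2*π)) (u2 + (0:ℤ)*(2*π)) ×ˢ Set.Icc (u3 + (-1:ℤ)*(2*π)) (u4 + (-1:ℤ)*(2*π))) ∪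
      (Set.Icc (u1 + (-1:ℤ)*(2*π)) (u2 + (-1:ℤ)*(2*π)) ×ˢ Set.Icc (u3 + (0:ℤ)*(2*π)) (u4 + (0:ℤ)*(2*π))) ∪
      (Set.Icc (u1 + (-1:ℤ)*(2*π)) (u2 + (-1:ℤ)*(2*π)) ×ˢ Set.Icc (u3 + (-1:ℤ)*(2*π)) (u4 + (-1:ℤ)*(2*π))) := by
    rintro ⟨s, u⟩ ⟨hpre, ⟨⟨hs0, hs2⟩, ⟨hu0, hu2⟩⟩⟩
    obtain ⟨hm1, hm2⟩ := hpre
    simp only at hm1 hm2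
    rw [mem_arc_iff h12.le (by linarith)] at hm1
    rw [mem_arc_iff h34.le (by linarith)] at hm2
    obtain ⟨m, hma, hmb⟩ := hm1
    obtain ⟨l, hla, hlb⟩ := hm2
    have hmcase : m = 0 ∨ m = -1 := by
      have hub : (m:ℝ) * (2*π) < 2*π := by linarith
      have hlb' : -(2*π) - 2*π < (m:ℝ) * (2*π) := by linarith
      have h1 : (m:ℝ) < 1 := by nlinarith [Real.two_pi_pos]
      have h2 : (-2:ℝ) < (m:ℝ) := by nlinarith [Real.two_pi_pos]
      have h1' : m < 1 := by exact_mod_cast h1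
      have h2' : (-2:ℤ) < m := by exact_mod_cast h2
      omega
    have hlcase : l = 0 ∨ l = -1 := by
      have hub : (l:ℝ) * (2*π) < 2*π := by linarith
      have hlb' : -(2*π) - 2*π < (l:ℝ) * (2*π) := by linarith
      have h1 : (l:ℝ) < 1 := by nlinarith [Real.two_pi_pos]
      have h2 : (-2:ℝ) < (l:ℝ) := by nlinarith [Real.two_pi_pos]
      have h1' : l < 1 := by exact_mod_cast h1
      have h2' : (-2:ℤ) < l := by exact_mod_cast h2
      omega
    rcases hmcase with rfl | rfl <;> rcases hlcase with rfl | rfl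
    · exact Or.inl (Or.inl (Or.inl ⟨⟨hma, hmb⟩, ⟨hla, hlb⟩⟩))
    · exact Or.inl (Or.inl (Or.inr ⟨⟨hma, hmb⟩, ⟨hla, hlb⟩⟩))
    · exact Or.inl (Or.inr ⟨⟨hma, hmb⟩, ⟨hla, hlb⟩⟩)
    · exact Or.inr ⟨⟨hma, hmb⟩, ⟨hla, hlb⟩⟩
  calc nuMeas S ≤ _ := measure_mono hcover
    _ ≤ 4 * ENNReal.ofReal (LF u1 u2 u3 u4) := by
        have e00 := nuMeas_rect u1 u2 u3 u4 0 0
        have e01 := nuMeas_rect u1 u2 u3 u4 0 (-1)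
        have e10 := nuMeas_rect u1 u2 u3 u4 (-1) 0
        have e11 := nuMeas_rect u1 u2 u3 u4 (-1) (-1)
        have hval := nuMeas_R00 h12 h23 h34 h41
        calc nuMeas _ ≤ nuMeas _ + nuMeas _ + nuMeas _ + nuMeas _ :=
              le_trans (measure_union_le _ _) (by
                gcongr
                exact le_trans (measure_union_le _ _) (by
                  gcongr
                  exact measure_union_le _ _))
          _ = 4 * ENNReal.ofReal (LF u1 u2 u3 u4) := by
              rw [e00, e01, e10, e11, hval]; ring

end BoxBound
section BoxBound2

open Real MeasureTheory

lemma liouville_box_le {u1 u2 u3 u4 : ℝ}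
    (h12 : u1 < u2) (h23 : u2 < u3) (h34 : u3 < u4) (h41 : u4 < u1 + 2*π) :
    liouville (boxSet (Circle.exp u1) (Circle.exp u2) (Circle.exp u3) (Circle.exp u4)) ≤
      4 * ENNReal.ofReal (LF u1 u2 u3 u4) := by
  set k : ℤ := ⌊u1 / (2*π)⌋ with hk
  set c : ℝ := k * (2*π) with hc
  have hfl : c ≤ u1 := by
    rw [hc]
    exact (le_div_iff₀ Real.two_pi_pos).mp (Int.floor_le (u1 / (2*π)))
  have hfu : u1 < c + 2*π := by
    have := (div_lt_iff₀ Real.two_pi_pos).mp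
      (by exact_mod_cast Int.lt_floor_add_one (u1 / (2*π)) : u1 / (2*π) < (k:ℝ) + 1)
    rw [hc]; linarith
  have hexp : ∀ v : ℝ, Circle.exp (v - c) = Circle.exp v := fun v =>
    Circle.exp_eq_exp.mpr ⟨-k, by rw [hc]; push_cast; ring⟩
  have hLF : LF (u1 - c) (u2 - c) (u3 - c) (u4 - c) = LF u1 u2 u3 u4 := by
    unfold LF
    ring_nf
  have := liouville_box_le_core (u1 := u1 - c) (u2 := u2 - c) (u3 := u3 - c) (u4 := u4 - c)
    (by linarith) (by linarith) (by linarith) (by linarith) (by linarith) (by linarith)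
  rw [hexp, hexp, hexp, hexp, hLF] at this
  exact this

end BoxBound2
section PerN

open Real MeasureTheory

lemma preimage_symm_eq_image (hh : Circle ≃ₜ Circle) (Q : Set (Circle × Circle)) :
    (⇑(hh.prodCongr hh).symm) ⁻¹' Q = (fun q : Circle × Circle => (hh q.1, hh q.2)) '' Q := by
  ext q
  constructor
  · intro hq
    refine ⟨(hh.symm q.1, hh.symm q.2), ?_, ?_⟩
    · simpa [Homeomorph.prodCongr, Prod.map] using hq
    · simp
  · rintro ⟨x, hx, rfl⟩
    simpa [Homeomorph.prodCongr] using hx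

lemma ofReal_four_log_two : (4 : ℝ≥0∞) * ENNReal.ofReal (Real.log 2) =
    ENNReal.ofReal (4 * Real.log 2) := by
  rw [ENNReal.ofReal_mul (by norm_num : (0:ℝ) ≤ 4)]
  norm_num

lemma per_n (hh : Circle ≃ₜ Circle) (hor : OrientationPreserving hh)
    {p1 p2 p3 p4 p5 p6 p7 p8 : ℝ}
    (o12 : p1 < p2) (o23 : p2 < p3) (o34 : p3 < p4) (o45 : p4 < p5)
    (o56 : p5 < p6) (o67 : p6 < p7) (o78 : p7 < p8) (o81 : p8 < p1 + 2*π) :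
    liouville ((fun q : Circle × Circle => (hh q.1, hh q.2)) ''
        boxSet (Circle.exp p1) (Circle.exp p2) (Circle.exp p5) (Circle.exp p6)) ≤
      ENNReal.ofReal (4 * Real.log 2) ∨
    liouville ((fun q : Circle × Circle => (hh q.1, hh q.2)) ''
        boxSet (Circle.exp p3) (Circle.exp p4) (Circle.exp p7) (Circle.exp p8)) ≤
      ENNReal.ofReal (4 * Real.log 2) := by
  obtain ⟨v1, hv1⟩ : ∃ v1, hh (Circle.exp p1) = Circle.exp v1 :=
    ⟨Complex.arg (hh (Circle.exp p1)), (Circle.exp_arg _).symm⟩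
  obtain ⟨v2, v3, h12, h23, h31, hv2, hv3⟩ :=
    ccw3_shift (hor _ _ _ (ccw3_of_reps o12 o23 (by linarith))) hv1
  obtain ⟨v4, h34, h41, hv4⟩ := ccw_step hv1 hv3 (by linarith) h31
    (hor _ _ _ (ccw3_of_reps (by linarith) o34 (by linarith)))
  obtain ⟨v5, h45, h51, hv5⟩ := ccw_step hv1 hv4 (by linarith) h41
    (hor _ _ _ (ccw3_of_reps (by linarith) o45 (by linarith)))
  obtain ⟨v6, h56, h61, hv6⟩ := ccw_step hv1 hv5 (by linarith) h51
    (hor _ _ _ (ccw3_of_reps (by linarith) o56 (by linarith)))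
  obtain ⟨v7, h67, h71, hv7⟩ := ccw_step hv1 hv6 (by linarith) h61
    (hor _ _ _ (ccw3_of_reps (by linarith) o67 (by linarith)))
  obtain ⟨v8, h78, h81, hv8⟩ := ccw_step hv1 hv7 (by linarith) h71
    (hor _ _ _ (ccw3_of_reps (by linarith) o78 (by linarith)))
  have himg1 : (fun q : Circle × Circle => (hh q.1, hh q.2)) ''
      boxSet (Circle.exp p1) (Circle.exp p2) (Circle.exp p5) (Circle.exp p6) ⊆
      boxSet (Circle.exp v1) (Circle.exp v2) (Circle.exp v5) (Circle.exp v6) := by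
    rintro ⟨x, y⟩ ⟨⟨x0, y0⟩, ⟨hx0, hy0⟩, heq⟩
    simp only [Prod.mk.injEq] at heq
    obtain ⟨rfl, rfl⟩ := heq
    exact ⟨image_arc_subset hor o12 (by linarith) hv1 hv2 h12 (by linarith) _ hx0,
      image_arc_subset hor o56 (by linarith) hv5 hv6 h56 (by linarith) _ hy0⟩
  have himg2 : (fun q : Circle × Circle => (hh q.1, hh q.2)) ''
      boxSet (Circle.exp p3) (Circle.exp p4) (Circle.exp p7) (Circle.exp p8) ⊆
      boxSet (Circle.exp v3) (Circle.exp v4) (Circle.exp v7) (Circle.exp v8) := by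
    rintro ⟨x, y⟩ ⟨⟨x0, y0⟩, ⟨hx0, hy0⟩, heq⟩
    simp only [Prod.mk.injEq] at heq
    obtain ⟨rfl, rfl⟩ := heq
    exact ⟨image_arc_subset hor o34 (by linarith) hv3 hv4 h34 (by linarith) _ hx0,
      image_arc_subset hor o78 (by linarith) hv7 hv8 h78 (by linarith) _ hy0⟩
  have bound1 := liouville_box_le (u1 := v1) (u2 := v2) (u3 := v5) (u4 := v6)
    h12 (by linarith) h56 (by linarith)
  have bound2 := liouville_box_le (u1 := v3) (u2 := v4) (u3 := v7) (u4 := v8)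
    h34 (by linarith) h78 (by linarith)
  rcases min_LF (u1 := v1) (u2 := v2) (u3 := v5) (u4 := v6) h12 (by linarith) h56 (by linarith)
    with hmin | hmin
  · left
    calc liouville _ ≤ liouville (boxSet (Circle.exp v1) (Circle.exp v2)
          (Circle.exp v5) (Circle.exp v6)) := measure_mono himg1
      _ ≤ 4 * ENNReal.ofReal (LF v1 v2 v5 v6) := bound1
      _ ≤ 4 * ENNReal.ofReal (Real.log 2) := by gcongr
      _ = ENNReal.ofReal (4 * Real.log 2) := ofReal_four_log_two
  · right
    have hmono : LF v3 v4 v7 v8 ≤ LF v2 v5 v6 (v1 + 2*π) :=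
      LF_mono (by linarith) (by linarith) (by linarith) (by linarith)
        (by linarith) h34 (by linarith) (by linarith) h78 (by linarith)
    calc liouville _ ≤ liouville (boxSet (Circle.exp v3) (Circle.exp v4)
          (Circle.exp v7) (Circle.exp v8)) := measure_mono himg2
      _ ≤ 4 * ENNReal.ofReal (LF v3 v4 v7 v8) := bound2
      _ ≤ 4 * ENNReal.ofReal (Real.log 2) := by
          gcongr
          exact le_trans hmono hmin
      _ = ENNReal.ofReal (4 * Real.log 2) := ofReal_four_log_two

end PerN
section Bump

open Real MeasureTheory

lemma bump_exists (α : Measure (Circle × Circle)) (hα : IsGeodesicCurrent α)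
    {a1 m1 a2 b1 m2 b2 : ℝ} (ha1 : a1 < m1) (ha2 : m1 < a2) (hb1 : b1 < m2) (hb2 : m2 < b2)
    (hsep1 : a2 < b1) (hsep2 : b2 < a1 + 2*π)
    (hsupp : MemSupport α (Circle.exp m1, Circle.exp m2)) :
    ∃ ξ : C(Circle × Circle, ℝ), (∀ q, ξ q ∈ Set.Icc (0:ℝ) 1) ∧
      tsupport ξ ⊆ boxSet (Circle.exp a1) (Circle.exp a2) (Circle.exp b1) (Circle.exp b2) ∧
      tsupport ξ ⊆ geodSet ∧ 0 < ∫ q, ξ q ∂α := by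
  set Q := boxSet (Circle.exp a1) (Circle.exp a2) (Circle.exp b1) (Circle.exp b2) with hQ
  have harc1 : a2 < a1 + 2*π := by linarith
  have harc2 : b2 < b1 + 2*π := by linarith
  -- Q is compact and inside geodSet
  have hQcomp : IsCompact Q := (isCompact_arc (ha1.le.trans ha2.le) harc1).prod
    (isCompact_arc (hb1.le.trans hb2.le) harc2)
  have hQgeod : Q ⊆ geodSet := by
    rintro ⟨x, y⟩ ⟨hx, hy⟩
    rw [arcCC_eq_image (ha1.le.trans ha2.le) harc1] at hx
    rw [arcCC_eq_image (hb1.le.trans hb2.le) harc2] at hy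
    obtain ⟨s, ⟨hs1, hs2⟩, rfl⟩ := hx
    obtain ⟨u, ⟨hu1, hu2⟩, rfl⟩ := hy
    intro heq
    simp only at heq
    obtain ⟨m, hm⟩ := Circle.exp_eq_exp.mp heq
    have hm0 : m = 0 := int_mul_eq_zero (by linarith) (by linarith)
    rw [hm0] at hm
    simp at hm
    linarith
  -- the open box U, compact box K, open box V
  set U := myOpenArc a1 a2 ×ˢ myOpenArc b1 b2 with hU
  set K := arcCC (Circle.exp ((a1+m1)/2)) (Circle.exp ((m1+a2)/2)) ×ˢ
    arcCC (Circle.exp ((b1+m2)/2)) (Circle.exp ((m2+b2)/2)) with hK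
  set V := myOpenArc ((a1+m1)/2) ((m1+a2)/2) ×ˢ myOpenArc ((b1+m2)/2) ((m2+b2)/2) with hV
  have hUopen : IsOpen U := (isOpen_myOpenArc (ha1.trans ha2) harc1).prod
    (isOpen_myOpenArc (hb1.trans hb2) harc2)
  have hKcomp : IsCompact K := (isCompact_arc (by linarith) (by linarith)).prod
    (isCompact_arc (by linarith) (by linarith))
  have hVopen : IsOpen V := (isOpen_myOpenArc (by linarith) (by linarith)).prod
    (isOpen_myOpenArc (by linarith) (by linarith))
  have hVK : V ⊆ K := Set.prod_mono (myOpenArc_subset (by linarith) (by linarith))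
    (myOpenArc_subset (by linarith) (by linarith))
  have hKU : K ⊆ U := Set.prod_mono
    (arc_subset_myOpenArc (by linarith) (by linarith) (by linarith) harc1)
    (arc_subset_myOpenArc (by linarith) (by linarith) (by linarith) harc2)
  have hUQ : U ⊆ Q := Set.prod_mono (myOpenArc_subset (ha1.trans ha2) harc1)
    (myOpenArc_subset (hb1.trans hb2) harc2)
  have hmemV : (Circle.exp m1, Circle.exp m2) ∈ V :=
    ⟨mem_myOpenArc (by linarith) (by linarith) (by linarith),
     mem_myOpenArc (by linarith) (by linarith) (by linarith)⟩
  -- Urysohn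
  obtain ⟨ξ, hξsupp, hξone, hξmem⟩ := exists_tsupport_one_of_isOpen_isClosed hUopen
    (isClosed_closure.isCompact) hKcomp.isClosed hKU
  have htsQ : tsupport ξ ⊆ Q := hξsupp.trans hUQ
  have htsgeod : tsupport ξ ⊆ geodSet := htsQ.trans hQgeod
  refine ⟨ξ, hξmem, htsQ, htsgeod, ?_⟩
  -- positivity of the integral
  have hQfin : α Q < ⊤ := hα.2 Q hQcomp hQgeod
  haveI : IsFiniteMeasure (α.restrict Q) :=
    ⟨by rw [Measure.restrict_apply_univ]; exact hQfin⟩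
  have hintOn : IntegrableOn (⇑ξ) Q α := by
    apply Integrable.mono' (integrable_const (1:ℝ))
    · exact ξ.continuous.aestronglyMeasurable
    · filter_upwards with x
      rw [Real.norm_eq_abs, abs_le]
      exact ⟨by linarith [(hξmem x).1], (hξmem x).2⟩
  have hint : Integrable (⇑ξ) α :=
    (integrableOn_iff_integrable_of_support_subset
      ((Function.support_subset_iff'.mpr (fun x hx =>
        image_eq_zero_of_notMem_tsupport (fun hmem => hx (htsQ hmem)))) )).mp hintOn
  have hKV : 0 < α K := lt_of_lt_of_le (hsupp V hVopen hmemV) (measure_mono hVK)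
  have hKfin : α K < ⊤ := lt_of_le_of_lt (measure_mono (hKU.trans hUQ)) hQfin
  have step1 : (α K).toReal ≤ ∫ q, ξ q ∂α := by
    have h1 : ∫ q in K, ξ q ∂α = (α K).toReal := by
      rw [setIntegral_congr_fun hKcomp.isClosed.measurableSet hξone]
      simp [Measure.real_def]
    calc (α K).toReal = ∫ q in K, ξ q ∂α := h1.symm
      _ ≤ ∫ q, ξ q ∂α := setIntegral_le_integral hint
          (Filter.Eventually.of_forall (fun x => (hξmem x).1))
  exact lt_of_lt_of_le (ENNReal.toReal_pos hKV.ne' hKfin.ne) step1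

end Bump
section Main

open Real MeasureTheory

lemma main_core (h : ℕ → Circle ≃ₜ Circle) (hop : ∀ n, OrientationPreserving (h n))
    (t : ℕ → ℝ) (ht : ∀ n, 0 < t n) (htop : Tendsto t atTop atTop)
    (α : Measure (Circle × Circle)) (hα : IsGeodesicCurrent α)
    (hconv : ∀ ξ : Circle × Circle → ℝ, Continuous ξ → tsupport ξ ⊆ geodSet →
      Tendsto (fun n => ∫ p, ξ p ∂(ENNReal.ofReal (1 / t n) • pullbackCurrent (h n)))
        atTop (𝓝 (∫ p, ξ p ∂α)))
    (x1 x2 y1 y2 : Circle) (hs1 : MemSupport α (x1, y1)) (hs2 : MemSupport α (x2, y2))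
    (hccw : Ccw4 x1 x2 y1 y2) : False := by
  obtain ⟨t1, t2, t3, t4, h12, h23, h34, h41, rfl, rfl, rfl, rfl⟩ := hccw
  set ε := (min (min (t2 - t1) (t3 - t2)) (min (t4 - t3) (t1 + 2*π - t4))) / 4 with hε
  have hmins : 0 < min (min (t2 - t1) (t3 - t2)) (min (t4 - t3) (t1 + 2*π - t4)) :=
    lt_min (lt_min (by linarith) (by linarith)) (lt_min (by linarith) (by linarith))
  have hεpos : 0 < ε := by rw [hε]; positivity
  have h4ε : 4*ε = min (min (t2 - t1) (t3 - t2)) (min (t4 - t3) (t1 + 2*π - t4)) := by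
    rw [hε]; ring
  have m1 := min_le_left (min (t2 - t1) (t3 - t2)) (min (t4 - t3) (t1 + 2*π - t4))
  have m2 := min_le_right (min (t2 - t1) (t3 - t2)) (min (t4 - t3) (t1 + 2*π - t4))
  have m3 := min_le_left (t2 - t1) (t3 - t2)
  have m4 := min_le_right (t2 - t1) (t3 - t2)
  have m5 := min_le_left (t4 - t3) (t1 + 2*π - t4)
  have m6 := min_le_right (t4 - t3) (t1 + 2*π - t4)
  have g12 : 4*ε ≤ t2 - t1 := by rw [h4ε]; exact le_trans m1 m3
  have g23 : 4*ε ≤ t3 - t2 := by rw [h4ε]; exact le_trans m1 m4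
  have g34 : 4*ε ≤ t4 - t3 := by rw [h4ε]; exact le_trans m2 m5
  have g41 : 4*ε ≤ t1 + 2*π - t4 := by rw [h4ε]; exact le_trans m2 m6
  have hε2π : ε < 2*π := by linarith
  have hlog2 : 0 < Real.log 2 := Real.log_pos (by norm_num)
  -- bump functions
  obtain ⟨ξ1, hmem1, hts1Q, hts1g, hpos1⟩ := bump_exists α hα
    (a1 := t1 - ε) (m1 := t1) (a2 := t1 + ε) (b1 := t3 - ε) (m2 := t3) (b2 := t3 + ε)
    (by linarith) (by linarith) (by linarith) (by linarith) (by linarith) (by linarith) hs1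
  obtain ⟨ξ2, hmem2, hts2Q, hts2g, hpos2⟩ := bump_exists α hα
    (a1 := t2 - ε) (m1 := t2) (a2 := t2 + ε) (b1 := t4 - ε) (m2 := t4) (b2 := t4 + ε)
    (by linarith) (by linarith) (by linarith) (by linarith) (by linarith) (by linarith) hs2
  set c1 := ∫ q, ξ1 q ∂α with hc1
  set c2 := ∫ q, ξ2 q ∂α with hc2
  set M := min c1 c2 with hM
  have hMpos : 0 < M := lt_min hpos1 hpos2
  have hT1 := hconv ξ1 ξ1.continuous hts1g
  have hT2 := hconv ξ2 ξ2.continuous hts2g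
  rw [Metric.tendsto_atTop] at hT1 hT2
  obtain ⟨N1, hN1⟩ := hT1 (M/2) (by positivity)
  obtain ⟨N2, hN2⟩ := hT2 (M/2) (by positivity)
  obtain ⟨N3, hN3⟩ := Filter.eventually_atTop.mp
    (Filter.tendsto_atTop.mp htop (8 * Real.log 2 / M + 1))
  set n := max N1 (max N2 N3) with hn
  have hd1 := hN1 n (le_max_left _ _)
  have hd2 := hN2 n (le_trans (le_max_left _ _) (le_max_right _ _))
  have htn : 8 * Real.log 2 / M + 1 ≤ t n :=
    hN3 n (le_trans (le_max_right _ _) (le_max_right _ _))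
  -- the smallness bound for the chosen box
  have hsmall : (1 / t n) * (4 * Real.log 2) < M/2 := by
    have hcancel : M * (8 * Real.log 2 / M) = 8 * Real.log 2 :=
      mul_div_cancel₀ _ hMpos.ne'
    rw [show (1 / t n) * (4 * Real.log 2) = 4 * Real.log 2 / t n by ring,
      div_lt_iff₀ (ht n)]
    nlinarith [mul_le_mul_of_nonneg_left htn hMpos.le]
  -- apply the per-n dichotomy
  rcases per_n (h n) (hop n)
    (p1 := t1 - ε) (p2 := t1 + ε) (p3 := t2 - ε) (p4 := t2 + ε)
    (p5 := t3 - ε) (p6 := t3 + ε) (p7 := t4 - ε) (p8 := t4 + ε)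
    (by linarith) (by linarith) (by linarith) (by linarith)
    (by linarith) (by linarith) (by linarith) (by linarith) with hbound | hbound
  · -- the first box is small
    have hQmeas : MeasurableSet (boxSet (Circle.exp (t1 - ε)) (Circle.exp (t1 + ε))
        (Circle.exp (t3 - ε)) (Circle.exp (t3 + ε))) :=
      measurableSet_boxSet (by linarith) (by linarith) (by linarith) (by linarith)
    have hpull : pullbackCurrent (h n) (boxSet (Circle.exp (t1 - ε)) (Circle.exp (t1 + ε))
        (Circle.exp (t3 - ε)) (Circle.exp (t3 + ε))) =
        liouville ((fun q : Circle × Circle => ((h n) q.1, (h n) q.2)) ''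
          boxSet (Circle.exp (t1 - ε)) (Circle.exp (t1 + ε))
            (Circle.exp (t3 - ε)) (Circle.exp (t3 + ε))) := by
      unfold pullbackCurrent
      rw [Measure.map_apply (Homeomorph.continuous _).measurable hQmeas,
        preimage_symm_eq_image]
    have hνQ : (ENNReal.ofReal (1 / t n) • pullbackCurrent (h n))
        (boxSet (Circle.exp (t1 - ε)) (Circle.exp (t1 + ε))
          (Circle.exp (t3 - ε)) (Circle.exp (t3 + ε))) ≤
        ENNReal.ofReal ((1 / t n) * (4 * Real.log 2)) := by
      rw [Measure.smul_apply, smul_eq_mul, hpull,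
        ENNReal.ofReal_mul (one_div_pos.mpr (ht n)).le]
      exact mul_le_mul_right hbound _
    have hofr := MeasureTheory.integral_le_measure
      (μ := ENNReal.ofReal (1 / t n) • pullbackCurrent (h n))
      (f := ⇑ξ1)
      (s := boxSet (Circle.exp (t1 - ε)) (Circle.exp (t1 + ε))
        (Circle.exp (t3 - ε)) (Circle.exp (t3 + ε)))
      (fun x _ => (hmem1 x).2)
      (fun x hx => le_of_eq (image_eq_zero_of_notMem_tsupport (fun hmem => hx (hts1Q hmem))))
    have hF1le : ∫ q, ξ1 q ∂(ENNReal.ofReal (1 / t n) • pullbackCurrent (h n)) ≤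
        (1 / t n) * (4 * Real.log 2) := by
      refine (ENNReal.ofReal_le_ofReal_iff ?_).mp (le_trans hofr hνQ)
      exact mul_nonneg (one_div_pos.mpr (ht n)).le (by linarith)
    have hF1ge : M/2 ≤ ∫ q, ξ1 q ∂(ENNReal.ofReal (1 / t n) • pullbackCurrent (h n)) := by
      rw [Real.dist_eq] at hd1
      have := abs_lt.mp hd1
      have hMc1 : M ≤ c1 := min_le_left _ _
      linarith [this.1, this.2]
    linarith
  · -- the second box is small
    have hQmeas : MeasurableSet (boxSet (Circle.exp (t2 - ε)) (Circle.exp (t2 + ε))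
        (Circle.exp (t4 - ε)) (Circle.exp (t4 + ε))) :=
      measurableSet_boxSet (by linarith) (by linarith) (by linarith) (by linarith)
    have hpull : pullbackCurrent (h n) (boxSet (Circle.exp (t2 - ε)) (Circle.exp (t2 + ε))
        (Circle.exp (t4 - ε)) (Circle.exp (t4 + ε))) =
        liouville ((fun q : Circle × Circle => ((h n) q.1, (h n) q.2)) ''
          boxSet (Circle.exp (t2 - ε)) (Circle.exp (t2 + ε))
            (Circle.exp (t4 - ε)) (Circle.exp (t4 + ε))) := by
      unfold pullbackCurrent
      rw [Measure.map_apply (Homeomorph.continuous _).measurable hQmeas,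
        preimage_symm_eq_image]
    have hνQ : (ENNReal.ofReal (1 / t n) • pullbackCurrent (h n))
        (boxSet (Circle.exp (t2 - ε)) (Circle.exp (t2 + ε))
          (Circle.exp (t4 - ε)) (Circle.exp (t4 + ε))) ≤
        ENNReal.ofReal ((1 / t n) * (4 * Real.log 2)) := by
      rw [Measure.smul_apply, smul_eq_mul, hpull,
        ENNReal.ofReal_mul (one_div_pos.mpr (ht n)).le]
      exact mul_le_mul_right hbound _
    have hofr := MeasureTheory.integral_le_measure
      (μ := ENNReal.ofReal (1 / t n) • pullbackCurrent (h n))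
      (f := ⇑ξ2)
      (s := boxSet (Circle.exp (t2 - ε)) (Circle.exp (t2 + ε))
        (Circle.exp (t4 - ε)) (Circle.exp (t4 + ε)))
      (fun x _ => (hmem2 x).2)
      (fun x hx => le_of_eq (image_eq_zero_of_notMem_tsupport (fun hmem => hx (hts2Q hmem))))
    have hF2le : ∫ q, ξ2 q ∂(ENNReal.ofReal (1 / t n) • pullbackCurrent (h n)) ≤
        (1 / t n) * (4 * Real.log 2) := by
      refine (ENNReal.ofReal_le_ofReal_iff ?_).mp (le_trans hofr hνQ)
      exact mul_nonneg (one_div_pos.mpr (ht n)).le (by linarith)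
    have hF2ge : M/2 ≤ ∫ q, ξ2 q ∂(ENNReal.ofReal (1 / t n) • pullbackCurrent (h n)) := by
      rw [Real.dist_eq] at hd2
      have := abs_lt.mp hd2
      have hMc2 : M ≤ c2 := min_le_right _ _
      linarith [this.1, this.2]
    linarith

end Main


/-- a weak-star limit of rescaled Liouville currents `(1/t_n) L_{h_n}` with
`t_n → ∞` has no pair of crossing geodesics in its support. -/
theorem stmt10 (h : ℕ → Circle ≃ₜ Circle) (hop : ∀ n, OrientationPreserving (h n))
    (t : ℕ → ℝ) (ht : ∀ n, 0 < t n) (htop : Tendsto t atTop atTop)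
    (α : Measure (Circle × Circle)) (hα : IsGeodesicCurrent α)
    (hconv : ∀ ξ : Circle × Circle → ℝ, Continuous ξ → tsupport ξ ⊆ geodSet →
      Tendsto (fun n => ∫ p, ξ p ∂(ENNReal.ofReal (1 / t n) • pullbackCurrent (h n)))
        atTop (𝓝 (∫ p, ξ p ∂α))) :
    ¬ ∃ a b c d : Circle, MemSupport α (a, c) ∧ MemSupport α (b, d) ∧
        (Ccw4 a b c d ∨ Ccw4 a d c b) := by
  rintro ⟨a, b, c, d, hac, hbd, hcase | hcase⟩
  · exact main_core h hop t ht htop α hα hconv a b c d hac hbd hcase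
  · exact main_core h hop t ht htop α hα hconv b a d c hbd hac
      (ccw4_rotate (ccw4_rotate (ccw4_rotate hcase)))
end
end

section
/- For all real numbers δ < α < β < γ and every t > 0, the function F : (α, β) → ℝ defined by F(ξ) = ((α − e^t·γ + (e^t − 1)·ξ)·(e^t·β − (e^t − 1)·ξ − δ)) / ((α − δ)·e^t·(β − γ)) is positive and strictly decreasing on the interval (α, β). -/
open MeasureTheory Filter Topology Set
open scoped ENNReal

noncomputable section

/-- the earthquaked cross-ratio function is positive and strictly decreasing
on `(α, β)` (configuration with the earthquake geodesic endpoint between `α` and `β`). -/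
theorem stmt12 (α β γ δ t : ℝ) (hδα : δ < α) (hαβ : α < β) (hβγ : β < γ) (ht : 0 < t) :
    (∀ ξ ∈ Set.Ioo α β,
        0 < ((α - Real.exp t * γ + (Real.exp t - 1) * ξ) *
            (Real.exp t * β - (Real.exp t - 1) * ξ - δ)) /
          ((α - δ) * Real.exp t * (β - γ))) ∧
    StrictAntiOn
      (fun ξ : ℝ =>
        ((α - Real.exp t * γ + (Real.exp t - 1) * ξ) *
            (Real.exp t * β - (Real.exp t - 1) * ξ - δ)) /
          ((α - δ) * Real.exp t * (β - γ)))
      (Set.Ioo α β) := by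
  have hE : 1 < Real.exp t := by
    have := Real.add_one_lt_exp (ne_of_gt ht)
    linarith
  have hEpos : (0:ℝ) < Real.exp t := Real.exp_pos t
  have hk : 0 < Real.exp t - 1 := by linarith
  have hD : (α - δ) * Real.exp t * (β - γ) < 0 :=
    mul_neg_of_pos_of_neg (mul_pos (by linarith) hEpos) (by linarith)
  have hA : ∀ ξ ∈ Set.Ioo α β, α - Real.exp t * γ + (Real.exp t - 1) * ξ < 0 := by
    intro ξ hξ
    obtain ⟨h1, h2⟩ := hξ
    nlinarith
  have hB : ∀ ξ ∈ Set.Ioo α β, 0 < Real.exp t * β - (Real.exp t - 1) * ξ - δ := by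
    intro ξ hξ
    obtain ⟨h1, h2⟩ := hξ
    nlinarith
  constructor
  · intro ξ hξ
    exact div_pos_of_neg_of_neg (mul_neg_of_neg_of_pos (hA ξ hξ) (hB ξ hξ)) hD
  · intro x hx y hy hxy
    have hnum : (α - Real.exp t * γ + (Real.exp t - 1) * x) *
        (Real.exp t * β - (Real.exp t - 1) * x - δ) <
        (α - Real.exp t * γ + (Real.exp t - 1) * y) *
        (Real.exp t * β - (Real.exp t - 1) * y - δ) := by
      have hAx := hA x hx
      have hBy := hB y hy
      nlinarith [mul_pos (sub_pos.mpr hxy) hk]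
    exact div_lt_div_of_neg_of_lt hD hnum
end
end

section
/- For all real numbers α < β < γ < δ and every t > 0, the function G : (β, γ) → ℝ defined by G(ξ) = ((α − φ_ξ(γ))·(β − φ_ξ(δ))) / ((α − φ_ξ(δ))·(β − φ_ξ(γ))), where φ_ξ(z) = e^t·z + (1 − e^t)·ξ, is positive and strictly increasing on the interval (β, γ). -/
open MeasureTheory Filter Topology Set
open scoped ENNReal

noncomputable section

/-- the earthquaked cross-ratio function is positive and strictly increasing
on `(β, γ)` (configuration where the earthquake geodesic separates the sides of the box). -/
theorem stmt13 (α β γ δ t : ℝ) (hαβ : α < β) (hβγ : β < γ) (hγδ : γ < δ) (ht : 0 < t) :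
    (∀ ξ ∈ Set.Ioo β γ,
        0 < ((α - (Real.exp t * γ + (1 - Real.exp t) * ξ)) *
            (β - (Real.exp t * δ + (1 - Real.exp t) * ξ))) /
          ((α - (Real.exp t * δ + (1 - Real.exp t) * ξ)) *
            (β - (Real.exp t * γ + (1 - Real.exp t) * ξ)))) ∧
    StrictMonoOn
      (fun ξ : ℝ =>
        ((α - (Real.exp t * γ + (1 - Real.exp t) * ξ)) *
            (β - (Real.exp t * δ + (1 - Real.exp t) * ξ))) /
          ((α - (Real.exp t * δ + (1 - Real.exp t) * ξ)) *
            (β - (Real.exp t * γ + (1 - Real.exp t) * ξ))))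
      (Set.Ioo β γ) := by
  have hE : 1 < Real.exp t := by nlinarith [Real.add_one_le_exp t]
  set E := Real.exp t with hEdef
  set k : ℝ := E * (δ - γ) with hk
  have hkpos : 0 < k := by have := hγδ; nlinarith
  -- the key algebraic identity
  have key : ∀ ξ ∈ Set.Ioo β γ,
      0 < (E * γ + (1 - E) * ξ + k - α) * (E * γ + (1 - E) * ξ - β) ∧
      ((α - (E * γ + (1 - E) * ξ)) * (β - (E * δ + (1 - E) * ξ))) /
          ((α - (E * δ + (1 - E) * ξ)) * (β - (E * γ + (1 - E) * ξ))) =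
        1 + k * (β - α) / ((E * γ + (1 - E) * ξ + k - α) * (E * γ + (1 - E) * ξ - β)) := by
    intro ξ hξ
    obtain ⟨hξ1, hξ2⟩ := hξ
    have hu : γ < E * γ + (1 - E) * ξ := by nlinarith
    have hub : 0 < E * γ + (1 - E) * ξ - β := by linarith
    have hua : 0 < E * γ + (1 - E) * ξ + k - α := by nlinarith
    have hD : 0 < (E * γ + (1 - E) * ξ + k - α) * (E * γ + (1 - E) * ξ - β) :=
      mul_pos hua hub
    refine ⟨hD, ?_⟩
    have hδeq : E * δ + (1 - E) * ξ = E * γ + (1 - E) * ξ + k := by ring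
    rw [hδeq]
    have hne1 : (α - (E * γ + (1 - E) * ξ + k)) * (β - (E * γ + (1 - E) * ξ)) ≠ 0 := by
      have : (α - (E * γ + (1 - E) * ξ + k)) * (β - (E * γ + (1 - E) * ξ)) =
          (E * γ + (1 - E) * ξ + k - α) * (E * γ + (1 - E) * ξ - β) := by ring
      rw [this]; exact ne_of_gt hD
    have hf1 : α - (E * γ + (1 - E) * ξ + k) ≠ 0 := by intro h; linarith
    have hf2 : β - (E * γ + (1 - E) * ξ) ≠ 0 := by intro h; linarith
    have hf3 := hua.ne'
    have hf4 := hub.ne'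
    field_simp
    ring
  constructor
  · intro ξ hξ
    obtain ⟨hD, heq⟩ := key ξ hξ
    rw [heq]
    have : 0 < k * (β - α) / ((E * γ + (1 - E) * ξ + k - α) * (E * γ + (1 - E) * ξ - β)) :=
      div_pos (by nlinarith) hD
    linarith
  · intro x hx y hy hxy
    obtain ⟨hDx, heqx⟩ := key x hx
    obtain ⟨hDy, heqy⟩ := key y hy
    simp only [heqx, heqy]
    have hu : E * γ + (1 - E) * y < E * γ + (1 - E) * x := by nlinarith
    have hDlt : (E * γ + (1 - E) * y + k - α) * (E * γ + (1 - E) * y - β) <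
        (E * γ + (1 - E) * x + k - α) * (E * γ + (1 - E) * x - β) := by
      obtain ⟨hy1, hy2⟩ := hy
      have h1 : γ < E * γ + (1 - E) * y := by nlinarith
      apply mul_lt_mul' (by linarith) (by linarith) (by linarith)
      nlinarith
    have := div_lt_div_of_pos_left (show (0:ℝ) < k * (β - α) by nlinarith) hDy hDlt
    linarith
end
end
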